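/- arXiv:1210.6307 — 4 statements merged into one kernel-verified Lean document; each statement's English description precedes it below -/
import Mathlib

section
/- Let α > 0 and β be real numbers, let M_j = (j!)^α (ln(j+e))^{βj}, and for 0 < t < 1 put η(t) = exp(−(t·|ln t|^β)^{−1/α}). Then there exist constants a > 0, b > 0 and t₀ ∈ (0,1) such that η(a·t) ≤ h_M(t) ≤ η(b·t) for all t with 0 < t < t₀. -/
open scoped BigOperators Topology
open Metric Set

/-- Iterated partial derivative `D^J f` of `f` at `x`, for a multi-index `J : Fin n → ℕ`
(order `J i` in the `i`-th coordinate direction). -/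
noncomputable def DJ {n : ℕ} (J : Fin n → ℕ) (f : EuclideanSpace ℝ (Fin n) → ℝ)
    (x : EuclideanSpace ℝ (Fin n)) : ℝ :=
  iteratedFDeriv ℝ ((List.finRange n).flatMap fun i => List.replicate (J i) i).length f x
    fun m => EuclideanSpace.single (((List.finRange n).flatMap fun i => List.replicate (J i) i).get m) 1

/-- The function `h_M(t) = inf_{j ≥ 0} t^j M_j` for `t > 0`, and `h_M(t) = 0` for `t ≤ 0`. -/
noncomputable def hM (M : ℕ → ℝ) (t : ℝ) : ℝ :=
  if t ≤ 0 then 0 else ⨅ j : ℕ, t ^ j * M j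

/-- `M_{j+1}/M_j` is increasing in `j`. -/
def LogConvex (M : ℕ → ℝ) : Prop :=
  Monotone fun j => M (j + 1) / M j

/-- Moderate growth: `M_{j+k} ≤ A^{j+k} M_j M_k`. -/
def ModerateGrowth (M : ℕ → ℝ) : Prop :=
  ∃ A > (0:ℝ), ∀ j k : ℕ, M (j + k) ≤ A ^ (j + k) * M j * M k

/-- Strong non-quasianalyticity: `Σ_{j ≥ k} M_j/((j+1)M_{j+1}) ≤ A M_k/M_{k+1}`,
expressed via all partial sums. -/
def StronglyNonQuasianalytic (M : ℕ → ℝ) : Prop :=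
  ∃ A > (0:ℝ), ∀ k N : ℕ,
    ∑ j ∈ Finset.Ico k N, M j / ((j + 1 : ℝ) * M (j + 1)) ≤ A * (M k / M (k + 1))

/-- A strongly regular sequence. -/
def StronglyRegular (M : ℕ → ℝ) : Prop :=
  (∀ j, 0 < M j) ∧ M 0 = 1 ∧ Monotone M ∧ LogConvex M ∧ ModerateGrowth M ∧
    StronglyNonQuasianalytic M

/-- Membership in the Denjoy–Carleman class `C_M(Ω)`. -/
def MemCM {n : ℕ} (M : ℕ → ℝ) (Ω : Set (EuclideanSpace ℝ (Fin n)))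
    (f : EuclideanSpace ℝ (Fin n) → ℝ) : Prop :=
  ContDiffOn ℝ (⊤ : ℕ∞) f Ω ∧
    ∀ K ⊆ Ω, IsCompact K → ∃ C > (0:ℝ), ∃ σ > (0:ℝ), ∀ J : Fin n → ℕ, ∀ x ∈ K,
      |DJ J f x| ≤ C * σ ^ (∑ i, J i) * (Nat.factorial (∑ i, J i) : ℝ) * M (∑ i, J i)

/-- `f` is flat at `a`: all partial derivatives (including order 0) vanish at `a`. -/
def FlatAt {n : ℕ} (f : EuclideanSpace ℝ (Fin n) → ℝ) (a : EuclideanSpace ℝ (Fin n)) : Prop :=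
  ∀ J : Fin n → ℕ, DJ J f a = 0

/-- The `C_M` Łojasiewicz condition for `φ` with zero set `X` in `Ω`:
`h_M(λ dist(x,X)) |D^J(1/φ)(x)| ≤ C σ^j j! M_j` on `K \ X`. -/
def CMLoj {n : ℕ} (M : ℕ → ℝ) (Ω X : Set (EuclideanSpace ℝ (Fin n)))
    (φ : EuclideanSpace ℝ (Fin n) → ℝ) : Prop :=
  ∀ K ⊆ Ω, IsCompact K → ∀ lam > (0:ℝ), ∃ C > (0:ℝ), ∃ σ > (0:ℝ),
    ∀ J : Fin n → ℕ, ∀ x ∈ K, x ∉ X →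
      hM M (lam * infDist x X) * |DJ J (fun y => (φ y)⁻¹) x| ≤
        C * σ ^ (∑ i, J i) * (Nat.factorial (∑ i, J i) : ℝ) * M (∑ i, J i)

/-- The sequence `M_j = (j!)^α (ln(j+e))^{βj}`. -/
noncomputable def Mgev (α β : ℝ) (j : ℕ) : ℝ :=
  (Nat.factorial j : ℝ) ^ α * Real.log ((j : ℝ) + Real.exp 1) ^ (β * j)

/-- The function `η(t) = exp(-(t |ln t|^β)^{-1/α})`. -/
noncomputable def eta (α β t : ℝ) : ℝ :=
  Real.exp (-(t * |Real.log t| ^ β) ^ (-1 / α))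

open Real Filter

noncomputable def lam (j : ℕ) : ℝ := Real.log (Real.log ((j : ℝ) + Real.exp 1))

noncomputable def FF (α β L : ℝ) (j : ℕ) : ℝ :=
  α * Real.log (Nat.factorial j) + β * j * lam j - j * L

noncomputable def EE (α β L : ℝ) : ℝ := Real.exp (L / α - β / α * Real.log L)

lemma one_le_log_je (j : ℕ) : 1 ≤ Real.log ((j : ℝ) + Real.exp 1) := by
  calc (1:ℝ) = Real.log (Real.exp 1) := (Real.log_exp 1).symm
  _ ≤ Real.log ((j:ℝ) + Real.exp 1) := by
      apply Real.log_le_log (exp_pos 1) (le_add_of_nonneg_left (Nat.cast_nonneg j))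

lemma lam_nonneg (j : ℕ) : 0 ≤ lam j :=
  Real.log_nonneg (one_le_log_je j)

lemma helper (p r : ℝ) {q : ℝ} (hq : 0 < q) :
    ∀ᶠ L : ℝ in atTop, p + r * Real.log L ≤ q * L := by
  have h := Real.isLittleO_log_id_atTop.bound (c := q / (2 * (|r| + 1))) (by positivity)
  filter_upwards [h, eventually_ge_atTop ((1:ℝ)), eventually_ge_atTop (2 * p / q)]
    with L h1 h2 h3
  have hL : (0:ℝ) < L := by linarith
  simp only [Real.norm_eq_abs, id] at h1
  have habs : |L| = L := abs_of_pos hL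
  rw [habs] at h1
  have h4 : r * Real.log L ≤ |r| * |Real.log L| := by
    calc r * Real.log L ≤ |r * Real.log L| := le_abs_self _
    _ = |r| * |Real.log L| := abs_mul _ _
  have h5 : |r| * |Real.log L| ≤ |r| * (q / (2 * (|r| + 1)) * L) :=
    mul_le_mul_of_nonneg_left h1 (abs_nonneg r)
  have h6 : |r| * (q / (2 * (|r| + 1)) * L) ≤ q / 2 * L := by
    rw [div_mul_eq_mul_div, mul_comm]
    rw [div_mul_eq_mul_div]
    rw [div_le_iff₀ (by positivity)]
    nlinarith [abs_nonneg r, hL, hq]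
  have h7 : p ≤ q / 2 * L := by
    rw [div_mul_eq_mul_div, le_div_iff₀ (by norm_num : (0:ℝ) < 2)]
    rw [div_le_iff₀ hq] at h3
    nlinarith
  nlinarith

lemma log_factorial_le (j : ℕ) : Real.log (Nat.factorial j) ≤ j * Real.log j := by
  rcases Nat.eq_zero_or_pos j with h | h
  · subst h; simp
  calc Real.log (Nat.factorial j) ≤ Real.log ((j:ℝ) ^ j) := by
        apply Real.log_le_log (by exact_mod_cast Nat.factorial_pos j)
        exact_mod_cast Nat.factorial_le_pow j
  _ = j * Real.log j := Real.log_pow j j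

lemma log_factorial_ge (j : ℕ) : (j:ℝ) * Real.log j - j ≤ Real.log (Nat.factorial j) := by
  induction j with
  | zero => simp
  | succ n ih =>
    have hfact : (Nat.factorial (n+1) : ℝ) = ((n:ℝ)+1) * Nat.factorial n := by
      rw [Nat.factorial_succ]; push_cast; ring
    have hlog : Real.log (Nat.factorial (n+1)) =
        Real.log ((n:ℝ)+1) + Real.log (Nat.factorial n) := by
      rw [hfact, Real.log_mul (by positivity) (by exact_mod_cast (Nat.factorial_pos n).ne')]
    rcases Nat.eq_zero_or_pos n with h | h
    · subst h; simp
    have hn : (1:ℝ) ≤ (n:ℝ) := by exact_mod_cast h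
    have key : (n:ℝ) * (Real.log ((n:ℝ)+1) - Real.log n) ≤ 1 := by
      have h1 : Real.log ((n:ℝ)+1) - Real.log n = Real.log (((n:ℝ)+1)/n) := by
        rw [Real.log_div (by linarith) (by linarith)]
      have h2 : Real.log (((n:ℝ)+1)/n) ≤ ((n:ℝ)+1)/n - 1 :=
        Real.log_le_sub_one_of_pos (by positivity)
      have h3 : ((n:ℝ)+1)/n - 1 = 1/n := by field_simp; ring
      rw [h1]
      calc (n:ℝ) * Real.log (((n:ℝ)+1)/n) ≤ (n:ℝ) * (1/n) := by
            rw [← h3] at *; exact mul_le_mul_of_nonneg_left h2 (by linarith)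
      _ = 1 := by field_simp
    rw [hlog]
    push_cast
    nlinarith [ih]

lemma xlog {α : ℝ} (hα : 0 < α) (M : ℝ) {x : ℝ} (hx : 0 < x) :
    x * (M - α * Real.log x) ≤ α * Real.exp (M / α) := by
  have hz : (0:ℝ) < Real.exp (M/α) / x := by positivity
  have h1 : Real.log (Real.exp (M/α) / x) ≤ Real.exp (M/α)/x - 1 :=
    Real.log_le_sub_one_of_pos hz
  have h2 : Real.log (Real.exp (M/α) / x) = M/α - Real.log x := by
    rw [Real.log_div (exp_ne_zero _) (ne_of_gt hx), Real.log_exp]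
  rw [h2] at h1
  have h3 : x * (M/α - Real.log x) ≤ x * (Real.exp (M/α)/x - 1) :=
    mul_le_mul_of_nonneg_left h1 hx.le
  have h4 : x * (Real.exp (M/α)/x - 1) = Real.exp (M/α) - x := by field_simp
  rw [h4] at h3
  have h5 : x * (M - α * Real.log x) = α * (x * (M/α - Real.log x)) := by
    field_simp
  rw [h5]
  nlinarith [exp_pos (M/α)]

lemma beta_log (α β : ℝ) (hα : 0 < α) {u : ℝ} (hu : max 1 (64 * β^2/α^2) ≤ u) :
    |β| * Real.log (u + 2) ≤ α/2 * u := by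
  have hu1 : (1:ℝ) ≤ u := le_trans (le_max_left _ _) hu
  have hu2 : 64 * β^2/α^2 ≤ u := le_trans (le_max_right _ _) hu
  have hupos : (0:ℝ) < u := by linarith
  -- log (u+2) ≤ 2 * sqrt (u+2)
  have hsq : Real.log (u+2) ≤ 2 * Real.sqrt (u+2) := by
    have := Real.log_le_sub_one_of_pos (x := Real.sqrt (u+2)) (by positivity)
    have hls : Real.log (Real.sqrt (u+2)) = Real.log (u+2) / 2 :=
      Real.log_sqrt (by linarith)
    rw [hls] at this
    nlinarith [Real.sqrt_nonneg (u+2)]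
  have hsq2 : Real.sqrt (u+2) ≤ Real.sqrt (3*u) := Real.sqrt_le_sqrt (by linarith)
  have hsq3 : Real.sqrt (3*u) ≤ 2 * Real.sqrt u := by
    rw [show (3:ℝ)*u = 3*u from rfl, Real.sqrt_mul (by norm_num : (0:ℝ) ≤ 3)]
    have : Real.sqrt 3 ≤ 2 := by
      rw [show (2:ℝ) = Real.sqrt 4 by rw [show (4:ℝ) = 2^2 by norm_num, Real.sqrt_sq]; norm_num]
      exact Real.sqrt_le_sqrt (by norm_num)
    nlinarith [Real.sqrt_nonneg u]
  -- sqrt u ≥ 8|β|/α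
  have hru : 8 * |β| / α ≤ Real.sqrt u := by
    have h64 : (8 * |β| / α)^2 = 64 * β^2/α^2 := by
      rw [div_pow]; rw [mul_pow]; rw [sq_abs]; norm_num
    calc 8 * |β| / α = Real.sqrt ((8 * |β| / α)^2) := (Real.sqrt_sq (by positivity)).symm
    _ = Real.sqrt (64 * β^2/α^2) := by rw [h64]
    _ ≤ Real.sqrt u := Real.sqrt_le_sqrt hu2
  have hsu : Real.sqrt u * Real.sqrt u = u := Real.mul_self_sqrt hupos.le
  have : |β| * Real.log (u+2) ≤ |β| * (4 * Real.sqrt u) := by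
    apply mul_le_mul_of_nonneg_left _ (abs_nonneg β)
    nlinarith
  calc |β| * Real.log (u+2) ≤ |β| * (4 * Real.sqrt u) := this
  _ ≤ α/2 * u := by
      have h8 : 8 * |β| ≤ α * Real.sqrt u := by
        rw [div_le_iff₀ hα] at hru; linarith
      nlinarith [abs_nonneg β, Real.sqrt_nonneg u, hα.le, hsu,
        mul_le_mul_of_nonneg_right h8 (Real.sqrt_nonneg u)]
set_option maxHeartbeats 2000000 in
lemma low (α β : ℝ) (hα : 0 < α) :
    ∃ C > 0, ∀ᶠ L : ℝ in atTop, ∀ j : ℕ, -(C * EE α β L) ≤ FF α β L j := by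
  set K₁ := |Real.log (1/(2*α) + 2)| with hK₁
  set K₂ := |Real.log (2/α + 4)| with hK₂
  set c₀ := |β| * (|Real.log (2*α)| + K₂) with hc₀
  have hc₀0 : 0 ≤ c₀ := by positivity
  set C := α * Real.exp ((α + c₀)/α) + 1 with hC
  have hCpos : 0 < C := by positivity
  refine ⟨C, hCpos, ?_⟩
  have ev3 : ∀ᶠ L : ℝ in atTop, Real.exp (L/(2*α)) * (3*L) ≤ C * EE α β L := by
    have h := helper (Real.log 3 - Real.log C) (1 + β/α) (q := 1/(2*α)) (by positivity)
    filter_upwards [h, eventually_ge_atTop (1:ℝ)] with L hh hL1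
    have hL : (0:ℝ) < L := by linarith
    have e1 : Real.exp (L/(2*α)) * (3*L) = Real.exp (L/(2*α) + (Real.log 3 + Real.log L)) := by
      rw [Real.exp_add, Real.exp_add, Real.exp_log (by norm_num : (0:ℝ) < 3), Real.exp_log hL]
    have e2 : C * EE α β L = Real.exp (Real.log C + (L/α - β/α * Real.log L)) := by
      rw [Real.exp_add, Real.exp_log hCpos]; rfl
    rw [e1, e2]
    apply Real.exp_le_exp.mpr
    have harith : (1/(2*α)) * L = L/α - L/(2*α) := by field_simp; ring
    have hexp : (1+β/α)*Real.log L = Real.log L + β/α*Real.log L := by ring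
    linarith [hh]
  have ev4 : ∀ᶠ L : ℝ in atTop, α + |β| * (Real.log L + K₁) ≤ 2*L := by
    have h := helper (α + |β| * K₁) (|β|) (q := 2) (by norm_num)
    filter_upwards [h] with L hh
    nlinarith [hh]
  filter_upwards [eventually_ge_atTop (1:ℝ),
    eventually_ge_atTop (α * (max 1 (64 * β^2/α^2)) / 2), ev3, ev4]
    with L hL1 hL2 hL3 hL4
  intro j
  have hLpos : (0:ℝ) < L := by linarith
  have hEpos : 0 < EE α β L := Real.exp_pos _
  have hCE : 0 < C * EE α β L := mul_pos hCpos hEpos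
  rcases Nat.eq_zero_or_pos j with hj | hj
  · subst hj
    have h0 : FF α β L 0 = 0 := by simp [FF]
    rw [h0]; linarith
  have hjr : (1:ℝ) ≤ (j:ℝ) := by exact_mod_cast hj
  have hjrpos : (0:ℝ) < (j:ℝ) := by linarith
  have hlogj : 0 ≤ Real.log j := Real.log_nonneg hjr
  have hlogjepos : (0:ℝ) < Real.log ((j:ℝ) + Real.exp 1) := by
    linarith [one_le_log_je j]
  have he2 : Real.exp 2 = Real.exp 1 * Real.exp 1 := by
    rw [← Real.exp_add]; norm_num
  have hee : Real.exp 1 + 1 ≤ Real.exp 2 := by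
    nlinarith [Real.exp_one_gt_d9, he2]
  -- log(j+e) ≤ log j + 2
  have hje2 : Real.log ((j:ℝ) + Real.exp 1) ≤ Real.log j + 2 := by
    have hj2 : (j:ℝ) + Real.exp 1 ≤ (j:ℝ) * Real.exp 2 := by
      have h1 : (j:ℝ) * (Real.exp 1 + 1) ≤ (j:ℝ) * Real.exp 2 :=
        mul_le_mul_of_nonneg_left hee hjrpos.le
      nlinarith [mul_nonneg (sub_nonneg.mpr hjr) (Real.exp_pos 1).le]
    calc Real.log ((j:ℝ) + Real.exp 1) ≤ Real.log ((j:ℝ) * Real.exp 2) :=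
          Real.log_le_log (by positivity) hj2
    _ = Real.log j + 2 := by
        rw [Real.log_mul (by positivity) (Real.exp_ne_zero 2), Real.log_exp]
  have hFB : (j:ℝ) * (α * Real.log j - α + β * lam j - L) ≤ FF α β L j := by
    have hm := mul_le_mul_of_nonneg_left (log_factorial_ge j) hα.le
    simp only [FF]; nlinarith [hm]
  set B := α * Real.log j - α + β * lam j - L with hBdef
  by_cases hB0 : 0 ≤ B
  · have : (0:ℝ) ≤ (j:ℝ) * B := mul_nonneg hjrpos.le hB0
    linarith [hFB]
  push_neg at hB0
  suffices hsuf : (j:ℝ) * (-B) ≤ C * EE α β L by nlinarith [hFB]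
  by_cases hsm : (j:ℝ) ≤ Real.exp (L/(2*α))
  · -- small j
    have hje : (j:ℝ) + Real.exp 1 ≤ Real.exp (L/(2*α) + 2) := by
      rw [Real.exp_add]
      have h1 : (1:ℝ) ≤ Real.exp (L/(2*α)) := Real.one_le_exp (by positivity)
      have h2 : Real.exp (L/(2*α)) * (Real.exp 1 + 1) ≤ Real.exp (L/(2*α)) * Real.exp 2 :=
        mul_le_mul_of_nonneg_left hee (Real.exp_pos _).le
      nlinarith [mul_le_mul_of_nonneg_right (show (1:ℝ) ≤ Real.exp (L/(2*α)) from h1) (Real.exp_pos 1).le]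
    have hlogje : Real.log ((j:ℝ) + Real.exp 1) ≤ L/(2*α) + 2 := by
      rw [← Real.log_exp (L/(2*α)+2)]
      exact Real.log_le_log (by positivity) hje
    have hlam : lam j ≤ Real.log L + K₁ := by
      have h1 : lam j ≤ Real.log (L/(2*α) + 2) := Real.log_le_log hlogjepos hlogje
      have h2 : L/(2*α) + 2 ≤ L * (1/(2*α) + 2) := by
        have : L/(2*α) = L * (1/(2*α)) := by ring
        nlinarith
      have h3 : Real.log (L * (1/(2*α)+2)) = Real.log L + Real.log (1/(2*α)+2) :=
        Real.log_mul (ne_of_gt hLpos) (by positivity)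
      calc lam j ≤ Real.log (L/(2*α) + 2) := h1
      _ ≤ Real.log (L * (1/(2*α)+2)) := Real.log_le_log (by positivity) h2
      _ = Real.log L + Real.log (1/(2*α)+2) := h3
      _ ≤ Real.log L + K₁ := by linarith [le_abs_self (Real.log (1/(2*α)+2))]
    have hnB : -B ≤ 3 * L := by
      have hb1 : -β * lam j ≤ |β| * lam j :=
        mul_le_mul_of_nonneg_right (neg_le_abs β) (lam_nonneg j)
      have hb2 : |β| * lam j ≤ |β| * (Real.log L + K₁) :=
        mul_le_mul_of_nonneg_left hlam (abs_nonneg β)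
      simp only [hBdef]
      have hb3 : 0 ≤ α * Real.log j := mul_nonneg hα.le hlogj
      linarith [hL4]
    calc (j:ℝ) * (-B) ≤ Real.exp (L/(2*α)) * (3*L) := by
          apply mul_le_mul hsm hnB (by linarith) (Real.exp_pos _).le
    _ ≤ C * EE α β L := hL3
  · -- large j
    push_neg at hsm
    have hlogj2 : L/(2*α) ≤ Real.log j := by
      rw [← Real.log_exp (L/(2*α))]
      exact Real.log_le_log (Real.exp_pos _) hsm.le
    have hLa : (0:ℝ) < L/(2*α) := by positivity
    have hlogje_lb : L/(2*α) ≤ Real.log ((j:ℝ) + Real.exp 1) := by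
      calc L/(2*α) ≤ Real.log j := hlogj2
      _ ≤ Real.log ((j:ℝ)+Real.exp 1) :=
          Real.log_le_log hjrpos (by nlinarith [Real.exp_pos 1])
    have hlam_lb : Real.log L - Real.log (2*α) ≤ lam j := by
      have h1 : Real.log (L/(2*α)) ≤ lam j := Real.log_le_log hLa hlogje_lb
      rwa [Real.log_div (ne_of_gt hLpos) (by positivity)] at h1
    -- bound α log j ≤ 2L + 2α
    have hmax : α * (max 1 (64 * β^2/α^2)) ≤ 2 * L := by linarith
    have hαlog : α * Real.log j ≤ 2*L + 2*α := by
      rcases le_or_gt β 0 with hβ | hβ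
      · by_cases hR : Real.log j ≤ max 1 (64*β^2/α^2)
        · have := mul_le_mul_of_nonneg_left hR hα.le
          nlinarith [hα.le]
        · push_neg at hR
          have hlam_ub : lam j ≤ Real.log (Real.log j + 2) := by
            apply Real.log_le_log hlogjepos hje2
          have hbl := beta_log α β hα (u := Real.log j) hR.le
          have habs : -β * lam j ≤ |β| * Real.log (Real.log j + 2) := by
            have h1 : -β * lam j = |β| * lam j := by
              rw [abs_of_nonpos hβ]
            rw [h1]
            apply mul_le_mul_of_nonneg_left hlam_ub (abs_nonneg β)
          nlinarith [hB0]
      · have hbl2 : 0 ≤ β * lam j := mul_nonneg hβ.le (lam_nonneg j)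
        nlinarith [hB0, hLpos.le]
    have hlogj3 : Real.log j ≤ 2*L/α + 2 := by
      have h1 : Real.log j ≤ (2*L + 2*α)/α := by
        rw [le_div_iff₀ hα]
        nlinarith [hαlog]
      have h2 : (2*L + 2*α)/α = 2*L/α + 2 := by field_simp
      linarith
    have hje_ub : Real.log ((j:ℝ)+Real.exp 1) ≤ 2*L/α + 4 := by linarith
    have hlam_ub2 : lam j ≤ Real.log L + K₂ := by
      have h1 : lam j ≤ Real.log (2*L/α + 4) := Real.log_le_log hlogjepos hje_ub
      have h2 : 2*L/α + 4 ≤ L * (2/α + 4) := by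
        have : 2*L/α = L * (2/α) := by ring
        nlinarith
      have h3 : Real.log (L * (2/α+4)) = Real.log L + Real.log (2/α+4) :=
        Real.log_mul (ne_of_gt hLpos) (by positivity)
      calc lam j ≤ Real.log (2*L/α + 4) := h1
      _ ≤ Real.log (L * (2/α+4)) := Real.log_le_log (by positivity) h2
      _ = Real.log L + Real.log (2/α+4) := h3
      _ ≤ Real.log L + K₂ := by linarith [le_abs_self (Real.log (2/α+4))]
    have hblam : β * Real.log L - c₀ ≤ β * lam j := by
      rcases le_or_gt 0 β with hβ|hβ
      · have h1 := mul_le_mul_of_nonneg_left hlam_lb hβ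
        have h2 : β * Real.log (2*α) ≤ |β| * |Real.log (2*α)| := by
          calc β * Real.log (2*α) ≤ |β * Real.log (2*α)| := le_abs_self _
          _ = |β| * |Real.log (2*α)| := abs_mul _ _
        have h4 : 0 ≤ |β| * K₂ := by positivity
        nlinarith
      · have h1 : β * (Real.log L + K₂) ≤ β * lam j := by
          apply mul_le_mul_of_nonpos_left hlam_ub2 hβ.le
        have h2 : -β * K₂ ≤ |β| * K₂ := by
          rw [abs_of_neg hβ]
        have h3 : 0 ≤ |β| * |Real.log (2*α)| := by positivity
        nlinarith
    have hfin : (j:ℝ) * (-B) ≤ (j:ℝ) * ((L + α + c₀ - β*Real.log L) - α * Real.log j) := by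
      apply mul_le_mul_of_nonneg_left _ hjrpos.le
      simp only [hBdef]
      linarith [hblam]
    have hxl := xlog hα (L + α + c₀ - β*Real.log L) hjrpos
    have hsplit : Real.exp ((L + α + c₀ - β*Real.log L)/α) =
        Real.exp ((α + c₀)/α) * EE α β L := by
      simp only [EE]
      rw [← Real.exp_add]
      congr 1
      field_simp
      ring
    calc (j:ℝ)*(-B) ≤ (j:ℝ) * ((L + α + c₀ - β*Real.log L) - α * Real.log j) := hfin
    _ ≤ α * Real.exp ((L + α + c₀ - β*Real.log L)/α) := hxl
    _ = α * Real.exp ((α + c₀)/α) * EE α β L := by rw [hsplit]; ring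
    _ ≤ C * EE α β L := by nlinarith [hEpos, Real.exp_pos ((α + c₀)/α)]
set_option maxHeartbeats 2000000 in
lemma up (α β : ℝ) (hα : 0 < α) :
    ∃ C > 0, ∀ᶠ L : ℝ in atTop, ∃ j : ℕ, FF α β L j ≤ -(C * EE α β L) := by
  set K₃ := |Real.log (2/α)| with hK₃
  set c₁ := |β| * (|Real.log (2*α)| + K₃) with hc₁
  have hc₁0 : 0 ≤ c₁ := by positivity
  set δ := Real.exp (-(c₁ + α * Real.log 2 + α + 1)/α) with hδdef
  have hδpos : 0 < δ := Real.exp_pos _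
  refine ⟨δ, hδpos, ?_⟩
  have hlogδ : Real.log δ = -(c₁ + α * Real.log 2 + α + 1)/α := Real.log_exp _
  have ev1 : ∀ᶠ L : ℝ in atTop, 0 ≤ Real.log δ + (L/α - β/α * Real.log L) := by
    have h := helper (-Real.log δ) (β/α) (q := 1/α) (by positivity)
    filter_upwards [h] with L hh
    have h1 : (1/α) * L = L/α := by ring
    linarith
  have ev2 : ∀ᶠ L : ℝ in atTop, (Real.log δ + (L/α - β/α * Real.log L)) + 2 ≤ 2*L/α := by
    have h := helper (Real.log δ + 2) (-β/α) (q := 1/α) (by positivity)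
    filter_upwards [h] with L hh
    have heq : -β/α * Real.log L = -(β/α*Real.log L) := by ring
    rw [heq] at hh
    have h1 : 2*L/α - L/α = (1/α)*L := by field_simp; ring
    linarith [hh, h1]
  have ev3 : ∀ᶠ L : ℝ in atTop, L/(2*α) ≤ Real.log δ + (L/α - β/α * Real.log L) := by
    have h := helper (-Real.log δ) (β/α) (q := 1/(2*α)) (by positivity)
    filter_upwards [h] with L hh
    have h1 : L/α - L/(2*α) = (1/(2*α))*L := by field_simp; ring
    linarith
  filter_upwards [eventually_ge_atTop (1:ℝ), ev1, ev2, ev3] with L hL1 hv1 hv2 hv3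
  have hLpos : (0:ℝ) < L := by linarith
  set x := δ * EE α β L with hx
  have hxpos : 0 < x := mul_pos hδpos (Real.exp_pos _)
  have hlogx : Real.log x = Real.log δ + (L/α - β/α * Real.log L) := by
    rw [hx]
    simp only [EE]
    rw [Real.log_mul (ne_of_gt hδpos) (ne_of_gt (Real.exp_pos _))]
    simp only [Real.log_exp]
  have hx1 : (1:ℝ) ≤ x := by
    rw [← Real.exp_log hxpos]
    calc (1:ℝ) = Real.exp 0 := by simp
    _ ≤ Real.exp (Real.log x) := Real.exp_le_exp.mpr (by rw [hlogx]; exact hv1)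
  refine ⟨⌈x⌉₊, ?_⟩
  set j := ⌈x⌉₊ with hjdef
  have hjx : x ≤ (j:ℝ) := Nat.le_ceil x
  have hjx2 : (j:ℝ) ≤ 2*x := by
    have := Nat.ceil_lt_add_one hxpos.le
    rw [← hjdef] at this
    linarith
  have hj1 : 1 ≤ j := Nat.ceil_pos.mpr hxpos
  have hjr : (1:ℝ) ≤ (j:ℝ) := by exact_mod_cast hj1
  have hjrpos : (0:ℝ) < (j:ℝ) := by linarith
  have hFB : FF α β L j ≤ (j:ℝ) * (α * Real.log j + β * lam j - L) := by
    have hm := mul_le_mul_of_nonneg_left (log_factorial_le j) hα.le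
    simp only [FF]; nlinarith [hm]
  have hlogjub : Real.log j ≤ Real.log 2 + Real.log x := by
    calc Real.log j ≤ Real.log (2*x) := Real.log_le_log hjrpos hjx2
    _ = Real.log 2 + Real.log x := Real.log_mul two_ne_zero (ne_of_gt hxpos)
  have hjepos : (0:ℝ) < (j:ℝ) + Real.exp 1 := by positivity
  have he2 : Real.exp 2 = Real.exp 1 * Real.exp 1 := by rw [← Real.exp_add]; norm_num
  have hub : Real.log ((j:ℝ) + Real.exp 1) ≤ 2*L/α := by
    have h1 : (j:ℝ) + Real.exp 1 ≤ x * Real.exp 2 := by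
      have he' : 2 + Real.exp 1 ≤ Real.exp 2 := by nlinarith [Real.exp_one_gt_d9, he2]
      have hm : (j:ℝ) + Real.exp 1 ≤ x*(2 + Real.exp 1) := by
        nlinarith [mul_nonneg (sub_nonneg.mpr hx1) (Real.exp_pos 1).le]
      have hm2 : x*(2 + Real.exp 1) ≤ x * Real.exp 2 :=
        mul_le_mul_of_nonneg_left he' hxpos.le
      linarith
    calc Real.log ((j:ℝ) + Real.exp 1) ≤ Real.log (x * Real.exp 2) :=
          Real.log_le_log hjepos h1
    _ = Real.log x + 2 := by
        rw [Real.log_mul (ne_of_gt hxpos) (Real.exp_ne_zero 2), Real.log_exp]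
    _ ≤ 2*L/α := by rw [hlogx]; linarith [hv2]
  have hlb : L/(2*α) ≤ Real.log ((j:ℝ) + Real.exp 1) := by
    calc L/(2*α) ≤ Real.log x := by rw [hlogx]; exact hv3
    _ ≤ Real.log j := Real.log_le_log hxpos hjx
    _ ≤ Real.log ((j:ℝ) + Real.exp 1) :=
        Real.log_le_log hjrpos (by nlinarith [Real.exp_pos 1])
  have hjelogpos : (0:ℝ) < Real.log ((j:ℝ)+Real.exp 1) :=
    lt_of_lt_of_le (by positivity) hlb
  have hlam_ub : lam j ≤ Real.log L + K₃ := by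
    have h1 : lam j ≤ Real.log (2*L/α) := Real.log_le_log hjelogpos hub
    have h2 : Real.log (2*L/α) = Real.log L + Real.log (2/α) := by
      rw [show 2*L/α = L * (2/α) by ring, Real.log_mul (ne_of_gt hLpos) (by positivity)]
    linarith [le_abs_self (Real.log (2/α))]
  have hlam_lb : Real.log L - Real.log (2*α) ≤ lam j := by
    have h1 : Real.log (L/(2*α)) ≤ lam j := Real.log_le_log (by positivity) hlb
    rwa [Real.log_div (ne_of_gt hLpos) (by positivity)] at h1
  have hblam : β * lam j ≤ β * Real.log L + c₁ := by
    rcases le_or_gt 0 β with hβ|hβ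
    · have h1 := mul_le_mul_of_nonneg_left hlam_ub hβ
      have h2 : β * K₃ ≤ |β| * K₃ :=
        mul_le_mul_of_nonneg_right (le_abs_self β) (abs_nonneg _)
      nlinarith [mul_nonneg (abs_nonneg β) (abs_nonneg (Real.log (2*α)))]
    · have h1 := mul_le_mul_of_nonpos_left hlam_lb hβ.le
      have h2 : -β * Real.log (2*α) ≤ |β| * |Real.log (2*α)| := by
        calc -β * Real.log (2*α) ≤ |(-β) * Real.log (2*α)| := le_abs_self _
        _ = |β| * |Real.log (2*α)| := by rw [abs_mul, abs_neg]
      have h3 : 0 ≤ |β| * K₃ := by positivity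
      nlinarith
  have hbracket : α * Real.log j + β * lam j - L ≤ -1 := by
    have h1 := mul_le_mul_of_nonneg_left hlogjub hα.le
    rw [hlogx] at h1
    have harr : α*(Real.log 2 + (Real.log δ + (L/α - β/α * Real.log L))) =
        α*Real.log 2 + α*Real.log δ + L - β*Real.log L := by field_simp; ring
    have h2 : α * Real.log δ = -(c₁ + α * Real.log 2 + α + 1) := by
      rw [hlogδ]; field_simp
    rw [harr] at h1
    linarith [hblam, hα.le]
  calc FF α β L j ≤ (j:ℝ) * (α * Real.log j + β * lam j - L) := hFB
  _ ≤ (j:ℝ) * (-1) := mul_le_mul_of_nonneg_left hbracket hjrpos.le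
  _ = -(j:ℝ) := by ring
  _ ≤ -x := by linarith
  _ = -(δ * EE α β L) := by rw [hx]
lemma term_eq (α β : ℝ) {t : ℝ} (ht : 0 < t) (j : ℕ) :
    t ^ j * Mgev α β j = Real.exp (FF α β (-Real.log t) j) := by
  have h1 : t ^ j = Real.exp ((j:ℝ) * Real.log t) := by
    rw [Real.exp_nat_mul, Real.exp_log ht]
  have h2 : (Nat.factorial j : ℝ) ^ (α:ℝ) = Real.exp (Real.log (Nat.factorial j) * α) := by
    rw [Real.rpow_def_of_pos (by exact_mod_cast Nat.factorial_pos j)]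
  have h3 : Real.log ((j:ℝ) + Real.exp 1) ^ (β * (j:ℝ)) =
      Real.exp (Real.log (Real.log ((j:ℝ) + Real.exp 1)) * (β * j)) := by
    rw [Real.rpow_def_of_pos (by linarith [one_le_log_je j])]
  unfold Mgev
  rw [h1, h2, h3, ← Real.exp_add, ← Real.exp_add]
  congr 1
  simp only [FF, lam]
  ring

lemma hM_eq (α β : ℝ) {t : ℝ} (ht : 0 < t) :
    hM (Mgev α β) t = ⨅ j : ℕ, Real.exp (FF α β (-Real.log t) j) := by
  rw [hM, if_neg (not_le.mpr ht)]
  exact iInf_congr fun j => term_eq α β ht j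

lemma eta_eq (α β : ℝ) (hα : 0 < α) {s : ℝ} (hs : 0 < s) (hs1 : s < 1) :
    eta α β s =
      Real.exp (-Real.exp ((-Real.log s - β * Real.log (-Real.log s))/α)) := by
  have hls : Real.log s < 0 := Real.log_neg hs hs1
  have habs : |Real.log s| = -(Real.log s) := abs_of_neg hls
  have hlpos : 0 < |Real.log s| := by rw [habs]; linarith
  have hbase : 0 < |Real.log s| ^ β := Real.rpow_pos_of_pos hlpos β
  have hpos : 0 < s * |Real.log s| ^ β := mul_pos hs hbase
  unfold eta
  congr 1
  rw [Real.rpow_def_of_pos hpos]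
  congr 1
  rw [Real.log_mul (ne_of_gt hs) (ne_of_gt hbase), Real.log_rpow hlpos, habs]
  field_simp
  ring


set_option maxHeartbeats 2000000 in
/-- for `M_j = (j!)^α (ln(j+e))^{βj}` there are `a, b > 0` with
`η(at) ≤ h_M(t) ≤ η(bt)` as `t → 0`. -/
theorem stmt_8 (α β : ℝ) (hα : 0 < α) :
    ∃ a > (0:ℝ), ∃ b > (0:ℝ), ∃ t₀ ∈ Set.Ioo (0:ℝ) 1, ∀ t : ℝ, 0 < t → t < t₀ →
      eta α β (a * t) ≤ hM (Mgev α β) t ∧ hM (Mgev α β) t ≤ eta α β (b * t) := by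
  obtain ⟨C₁, hC₁, hlow⟩ := low α β hα
  obtain ⟨C₂, hC₂, hup⟩ := up α β hα
  set a := Real.exp (-(α * |Real.log C₁| + |β| * Real.log 2 + 1)) with hadef
  set b := Real.exp (α * |Real.log C₂| + |β| * Real.log 2 + 1) with hbdef
  have hapos : 0 < a := Real.exp_pos _
  have hbpos : 0 < b := Real.exp_pos _
  have hloga : Real.log a = -(α * |Real.log C₁| + |β| * Real.log 2 + 1) := Real.log_exp _
  have hlogb : Real.log b = α * |Real.log C₂| + |β| * Real.log 2 + 1 := Real.log_exp _
  have hlog2 : (0:ℝ) ≤ Real.log 2 := Real.log_nonneg (by norm_num)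
  have hla : Real.log a < 0 := by
    rw [hloga]
    nlinarith [abs_nonneg (Real.log C₁), abs_nonneg β, hα.le]
  have hlb : 0 < Real.log b := by
    rw [hlogb]
    nlinarith [abs_nonneg (Real.log C₂), abs_nonneg β, hα.le]
  have ha1 : a < 1 := by
    calc a = Real.exp (Real.log a) := (Real.exp_log hapos).symm
    _ < Real.exp 0 := Real.exp_lt_exp.mpr hla
    _ = 1 := Real.exp_zero
  obtain ⟨L₀, hL₀⟩ := Filter.eventually_atTop.mp (hlow.and hup)
  set Lc := max L₀ (max (1 - Real.log a) (2 * Real.log b + 1)) with hLcdef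
  have hLc1 : (1:ℝ) ≤ Lc := by
    have h1 : (1:ℝ) ≤ 1 - Real.log a := by linarith
    calc (1:ℝ) ≤ 1 - Real.log a := h1
    _ ≤ max (1 - Real.log a) (2 * Real.log b + 1) := le_max_left _ _
    _ ≤ Lc := le_max_right _ _
  set t₀ := min (Real.exp (-Lc)) (1/(2*b)) with ht₀def
  have ht₀pos : 0 < t₀ := lt_min (Real.exp_pos _) (by positivity)
  have ht₀lt1 : t₀ < 1 := by
    apply lt_of_le_of_lt (min_le_left _ _)
    calc Real.exp (-Lc) < Real.exp 0 := Real.exp_lt_exp.mpr (by linarith)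
    _ = 1 := Real.exp_zero
  refine ⟨a, hapos, b, hbpos, t₀, ⟨ht₀pos, ht₀lt1⟩, ?_⟩
  intro t ht htlt
  have ht1 : t < 1 := lt_trans htlt ht₀lt1
  have hlogt : Real.log t < 0 := Real.log_neg ht ht1
  set L := -Real.log t with hLdef
  have hLL : Lc < L := by
    have h1 : t < Real.exp (-Lc) := lt_of_lt_of_le htlt (min_le_left _ _)
    have h2 := Real.log_lt_log ht h1
    rw [Real.log_exp] at h2
    simp only [hLdef]
    linarith
  have hLa2 : 1 - Real.log a ≤ L :=
    le_trans (le_trans (le_max_left _ _) (le_max_right _ _)) hLL.le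
  have hLb2 : 2 * Real.log b + 1 ≤ L :=
    le_trans (le_trans (le_max_right _ _) (le_max_right _ _)) hLL.le
  obtain ⟨hlowL, hupL⟩ := hL₀ L (le_trans (le_max_left _ _) hLL.le)
  have hL1 : (1:ℝ) ≤ L := le_trans hLc1 hLL.le
  have hLpos : (0:ℝ) < L := by linarith
  have hEpos : 0 < EE α β L := Real.exp_pos _
  have hMeq : hM (Mgev α β) t = ⨅ j : ℕ, Real.exp (FF α β L j) := hM_eq α β ht
  have hbdd : BddBelow (Set.range fun j : ℕ => Real.exp (FF α β L j)) := by
    refine ⟨0, ?_⟩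
    rintro y ⟨j, rfl⟩
    exact (Real.exp_pos _).le
  constructor
  · -- lower bound
    have haT : 0 < a*t := mul_pos hapos ht
    have haT1 : a*t < 1 := by nlinarith
    have heta := eta_eq α β hα haT haT1
    have hrw : -Real.log (a*t) = L - Real.log a := by
      rw [Real.log_mul (ne_of_gt hapos) (ne_of_gt ht)]
      simp only [hLdef]
      ring
    rw [hrw] at heta
    have hpos1 : 0 < L - Real.log a := by linarith
    have hD1 : Real.log L ≤ Real.log (L - Real.log a) :=
      Real.log_le_log hLpos (by linarith)
    have hD2 : Real.log (L - Real.log a) ≤ Real.log L + Real.log 2 := by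
      have h1 : L - Real.log a ≤ 2*L := by linarith
      calc Real.log (L - Real.log a) ≤ Real.log (2*L) := Real.log_le_log hpos1 h1
      _ = Real.log 2 + Real.log L := Real.log_mul two_ne_zero (ne_of_gt hLpos)
      _ = Real.log L + Real.log 2 := by ring
    have hexpineq : Real.log C₁ + (L/α - β/α*Real.log L) ≤
        (L - Real.log a - β * Real.log (L - Real.log a))/α := by
      rw [le_div_iff₀ hα]
      have e1 : (Real.log C₁ + (L/α - β/α*Real.log L)) * α =
          α*Real.log C₁ + L - β*Real.log L := by field_simp; ring
      rw [e1]
      have h2 : β * (Real.log (L - Real.log a) - Real.log L) ≤ |β| * Real.log 2 := by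
        have hD0 : 0 ≤ Real.log (L-Real.log a) - Real.log L := by linarith
        have hD2' : Real.log (L-Real.log a) - Real.log L ≤ Real.log 2 := by linarith
        calc β * (Real.log (L - Real.log a) - Real.log L)
            ≤ |β| * (Real.log (L - Real.log a) - Real.log L) :=
              mul_le_mul_of_nonneg_right (le_abs_self β) hD0
        _ ≤ |β| * Real.log 2 := mul_le_mul_of_nonneg_left hD2' (abs_nonneg β)
      have h3 : α * Real.log C₁ ≤ α * |Real.log C₁| :=
        mul_le_mul_of_nonneg_left (le_abs_self _) hα.le
      linarith [hloga, h2, h3]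
    have hC1E : C₁ * EE α β L = Real.exp (Real.log C₁ + (L/α - β/α*Real.log L)) := by
      simp only [EE]
      rw [Real.exp_add, Real.exp_log hC₁]
    have hMa : C₁ * EE α β L ≤
        Real.exp ((L - Real.log a - β * Real.log (L - Real.log a))/α) := by
      rw [hC1E]
      exact Real.exp_le_exp.mpr hexpineq
    rw [heta, hMeq]
    apply le_ciInf
    intro j
    have h5 := hlowL j
    apply Real.exp_le_exp.mpr
    linarith
  · -- upper bound
    obtain ⟨j₀, hj₀⟩ := hupL
    have hbT : 0 < b*t := mul_pos hbpos ht
    have hbT1 : b*t < 1 := by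
      have h1 : t < 1/(2*b) := lt_of_lt_of_le htlt (min_le_right _ _)
      rw [lt_div_iff₀ (by positivity)] at h1
      nlinarith
    have heta := eta_eq α β hα hbT hbT1
    have hrw : -Real.log (b*t) = L - Real.log b := by
      rw [Real.log_mul (ne_of_gt hbpos) (ne_of_gt ht)]
      simp only [hLdef]
      ring
    rw [hrw] at heta
    have hpos2 : 0 < L - Real.log b := by linarith
    have hD1 : Real.log (L - Real.log b) ≤ Real.log L :=
      Real.log_le_log hpos2 (by linarith)
    have hD2 : Real.log L - Real.log 2 ≤ Real.log (L - Real.log b) := by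
      have h1 : L ≤ 2*(L - Real.log b) := by linarith
      have h2 : Real.log L ≤ Real.log (2*(L-Real.log b)) := Real.log_le_log hLpos h1
      rw [Real.log_mul two_ne_zero (ne_of_gt hpos2)] at h2
      linarith
    have hexpineq : (L - Real.log b - β * Real.log (L - Real.log b))/α ≤
        Real.log C₂ + (L/α - β/α*Real.log L) := by
      rw [div_le_iff₀ hα]
      have e1 : (Real.log C₂ + (L/α - β/α*Real.log L)) * α =
          α*Real.log C₂ + L - β*Real.log L := by field_simp; ring
      rw [e1]
      have h2 : β * (Real.log L - Real.log (L - Real.log b)) ≤ |β| * Real.log 2 := by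
        have hD0 : 0 ≤ Real.log L - Real.log (L-Real.log b) := by linarith
        have hD2' : Real.log L - Real.log (L-Real.log b) ≤ Real.log 2 := by linarith
        calc β * (Real.log L - Real.log (L - Real.log b))
            ≤ |β| * (Real.log L - Real.log (L - Real.log b)) :=
              mul_le_mul_of_nonneg_right (le_abs_self β) hD0
        _ ≤ |β| * Real.log 2 := mul_le_mul_of_nonneg_left hD2' (abs_nonneg β)
      have h3 : -(α * |Real.log C₂|) ≤ α * Real.log C₂ := by
        have h4 := neg_abs_le (Real.log C₂)
        nlinarith
      linarith [hlogb, h2, h3]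
    have hC2E : C₂ * EE α β L = Real.exp (Real.log C₂ + (L/α - β/α*Real.log L)) := by
      simp only [EE]
      rw [Real.exp_add, Real.exp_log hC₂]
    have hMb : Real.exp ((L - Real.log b - β * Real.log (L - Real.log b))/α) ≤
        C₂ * EE α β L := by
      rw [hC2E]
      exact Real.exp_le_exp.mpr hexpineq
    rw [heta, hMeq]
    calc (⨅ j : ℕ, Real.exp (FF α β L j)) ≤ Real.exp (FF α β L j₀) := ciInf_le hbdd j₀
    _ ≤ Real.exp (-Real.exp ((L - Real.log b - β * Real.log (L - Real.log b))/α)) := by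
        apply Real.exp_le_exp.mpr
        linarith
end

section
/- Let M = (M_j)_{j≥0} be a sequence of positive reals with M_0 = 1, M increasing, M logarithmically convex, and satisfying the moderate growth condition. Then there exists a constant ρ ≥ 1, depending only on M, such that h_M(t) ≤ (h_M(ρt))² for every t ≥ 0. -/
open scoped BigOperators Topology
open Metric Set

/-- under moderate growth, there is `ρ ≥ 1` with
`h_M(t) ≤ (h_M(ρt))²` for all `t ≥ 0`. -/
theorem stmt_11 (M : ℕ → ℝ) (hpos : ∀ j, 0 < M j) (hM0 : M 0 = 1)
    (hmono : Monotone M) (hlc : LogConvex M) (hmg : ModerateGrowth M) :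
    ∃ ρ : ℝ, 1 ≤ ρ ∧ ∀ t : ℝ, 0 ≤ t → hM M t ≤ (hM M (ρ * t)) ^ 2 := by
  obtain ⟨A, hA, hAM⟩ := hmg
  refine ⟨max 1 A, le_max_left _ _, fun t ht => ?_⟩
  set ρ := max 1 A with hρ
  have hρ1 : (1:ℝ) ≤ ρ := le_max_left _ _
  have hρA : A ≤ ρ := le_max_right _ _
  rcases eq_or_lt_of_le ht with h0 | htpos
  · simp [hM, ← h0]
  · have hρt : 0 < ρ * t := mul_pos (lt_of_lt_of_le one_pos hρ1) htpos
    have hnn : ∀ j : ℕ, 0 ≤ (ρ * t) ^ j * M j := fun j =>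
      mul_nonneg (pow_nonneg hρt.le j) (hpos j).le
    have hbdd : BddBelow (Set.range fun j : ℕ => (ρ * t) ^ j * M j) :=
      ⟨0, fun x ⟨j, hj⟩ => hj ▸ hnn j⟩
    have hbdd' : BddBelow (Set.range fun j : ℕ => t ^ j * M j) :=
      ⟨0, fun x ⟨j, hj⟩ => hj ▸ mul_nonneg (pow_nonneg ht j) (hpos j).le⟩
    have hx0 : 0 ≤ hM M (ρ * t) := by
      rw [hM, if_neg (not_le.2 hρt)]
      exact le_ciInf hnn
    have key : ∀ j k : ℕ, hM M t ≤ ((ρ * t) ^ j * M j) * ((ρ * t) ^ k * M k) := by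
      intro j k
      rw [hM, if_neg (not_le.2 htpos)]
      refine le_trans (ciInf_le hbdd' (j + k)) ?_
      have h1 : t ^ (j + k) * M (j + k) ≤ t ^ (j + k) * (A ^ (j + k) * M j * M k) :=
        mul_le_mul_of_nonneg_left (hAM j k) (pow_nonneg ht _)
      refine h1.trans ?_
      have h2 : t ^ (j + k) * (A ^ (j + k) * M j * M k)
          ≤ t ^ (j + k) * (ρ ^ (j + k) * M j * M k) := by
        have hAρ : A ^ (j + k) * M j * M k ≤ ρ ^ (j + k) * M j * M k := by
          have := pow_le_pow_left₀ hA.le hρA (j + k)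
          exact mul_le_mul_of_nonneg_right
            (mul_le_mul_of_nonneg_right this (hpos j).le) (hpos k).le
        exact mul_le_mul_of_nonneg_left hAρ (pow_nonneg ht _)
      refine h2.trans (le_of_eq ?_)
      rw [mul_pow, mul_pow]
      ring
    have hrt : hM M (ρ * t) = ⨅ k : ℕ, (ρ * t) ^ k * M k := by
      rw [hM, if_neg (not_le.2 hρt)]
    have : hM M t ≤ hM M (ρ * t) * hM M (ρ * t) := by
      have hx0' : (0:ℝ) ≤ ⨅ k : ℕ, (ρ * t) ^ k * M k := hrt ▸ hx0
      conv_rhs => rw [hrt]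
      rw [Real.iInf_mul_of_nonneg hx0']
      refine le_ciInf fun j => ?_
      rw [Real.mul_iInf_of_nonneg (hnn j)]
      exact le_ciInf fun k => key j k
    calc hM M t ≤ hM M (ρ * t) * hM M (ρ * t) := this
    _ = (hM M (ρ * t)) ^ 2 := (sq _).symm
end

section
/- Let k ≥ 2 be an integer, let ψ : ℂ² → ℂ be defined by ψ(ζ) = ζ₁² + ζ₂^{2k}, and put δ = (2^{2k+1} + 4)^{-1}. Then for every x ∈ ℝ² with ψ(x) > 0 and every ζ ∈ ℂ² satisfying |ζ₁ − x₁| ≤ δ·ψ(x)^{1/2} and |ζ₂ − x₂| ≤ δ·ψ(x)^{1/(2k)}, one has |ψ(ζ)| ≥ ψ(x)/2. -/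
open scoped BigOperators Topology
open Metric Set

lemma aux_nat (k : ℕ) (hk : 2 ≤ k) : 4 * k + 1 ≤ 4 ^ k := by
  obtain ⟨m, rfl⟩ := Nat.exists_eq_add_of_le hk
  induction m with
  | zero => norm_num
  | succ n ih =>
    have h4 : 16 ≤ 4 ^ (2 + n) := by
      calc (16:ℕ) = 4 ^ 2 := by norm_num
      _ ≤ 4 ^ (2 + n) := Nat.pow_le_pow_right (by norm_num) (by omega)
    have h5 : 4 ^ (2 + (n + 1)) = 4 * 4 ^ (2 + n) := by ring
    have h6 := ih (by omega)
    omega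

/-- lower bound for `ψ(ζ) = ζ₁² + ζ₂^{2k}` on a polydisc around a real point:
`|ψ(ζ)| ≥ ψ(x)/2` for `|ζ₁ - x₁| ≤ δ ψ(x)^{1/2}`, `|ζ₂ - x₂| ≤ δ ψ(x)^{1/(2k)}`,
`δ = (2^{2k+1} + 4)⁻¹`. -/
theorem stmt_15 (k : ℕ) (hk : 2 ≤ k) (x₁ x₂ : ℝ)
    (hx : 0 < x₁ ^ 2 + x₂ ^ (2 * k)) (ζ₁ ζ₂ : ℂ)
    (h1 : ‖ζ₁ - (x₁ : ℂ)‖ ≤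
      ((2:ℝ) ^ (2 * k + 1) + 4)⁻¹ * (x₁ ^ 2 + x₂ ^ (2 * k)) ^ ((1:ℝ) / 2))
    (h2 : ‖ζ₂ - (x₂ : ℂ)‖ ≤
      ((2:ℝ) ^ (2 * k + 1) + 4)⁻¹ * (x₁ ^ 2 + x₂ ^ (2 * k)) ^ ((1:ℝ) / (2 * k))) :
    (x₁ ^ 2 + x₂ ^ (2 * k)) / 2 ≤ ‖ζ₁ ^ 2 + ζ₂ ^ (2 * k)‖ := by
  set ψ : ℝ := x₁ ^ 2 + x₂ ^ (2 * k) with hψdef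
  set δ : ℝ := ((2:ℝ) ^ (2 * k + 1) + 4)⁻¹ with hδdef
  have hD : (0:ℝ) < (2:ℝ) ^ (2 * k + 1) + 4 := by positivity
  have hδpos : 0 < δ := inv_pos.mpr hD
  have hone : (1:ℝ) ≤ (2:ℝ) ^ (2 * k + 1) := one_le_pow₀ (by norm_num)
  have hδ1 : δ ≤ 1 := inv_le_one_of_one_le₀ (by linarith)
  have hpow : (4 * (k:ℝ) + 1) ≤ (2:ℝ) ^ (2 * k) := by
    have h2' : ((4 * k + 1 : ℕ) : ℝ) ≤ ((4 ^ k : ℕ) : ℝ) := Nat.cast_le.mpr (aux_nat k hk)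
    push_cast at h2'
    calc (4 * (k:ℝ) + 1) ≤ (4:ℝ) ^ k := h2'
    _ = (2:ℝ) ^ (2 * k) := by rw [pow_mul]; norm_num
  set r : ℝ := ψ ^ ((1:ℝ) / 2) with hrdef
  set s : ℝ := ψ ^ ((1:ℝ) / (2 * k)) with hsdef
  have hrpos : 0 < r := Real.rpow_pos_of_pos hx _
  have hspos : 0 < s := Real.rpow_pos_of_pos hx _
  have hr2 : r ^ 2 = ψ := by
    rw [hrdef, ← Real.rpow_natCast (ψ ^ ((1:ℝ)/2)) 2, ← Real.rpow_mul hx.le]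
    norm_num
  have hk0 : (2 * k : ℝ) ≠ 0 := by positivity
  have hs2k : s ^ (2 * k) = ψ := by
    rw [hsdef, ← Real.rpow_natCast (ψ ^ ((1:ℝ)/(2*k))) (2*k), ← Real.rpow_mul hx.le]
    push_cast
    rw [one_div, inv_mul_cancel₀ hk0, Real.rpow_one]
  have hx2nn : (0:ℝ) ≤ x₂ ^ (2 * k) := by rw [pow_mul]; positivity
  have hx1 : |x₁| ≤ r := by
    apply (pow_le_pow_iff_left₀ (abs_nonneg x₁) hrpos.le two_ne_zero).mp
    rw [sq_abs, hr2]; rw [hψdef]; nlinarith [hx2nn]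
  have hx2 : |x₂| ≤ s := by
    apply (pow_le_pow_iff_left₀ (abs_nonneg x₂) hspos.le (by omega : 2*k ≠ 0)).mp
    rw [← abs_pow, abs_of_nonneg hx2nn, hs2k, hψdef]
    nlinarith [sq_nonneg x₁]
  -- bound on |ζ₂|
  have hζ2 : ‖ζ₂‖ ≤ (1 + δ) * s := by
    have hA := norm_add_le (ζ₂ - (x₂:ℂ)) ((x₂:ℂ))
    rw [sub_add_cancel, Complex.norm_real, Real.norm_eq_abs] at hA
    linarith [hx2, h2, hA]
  -- estimate 1
  have est1 : ‖ζ₁ ^ 2 - (x₁:ℂ) ^ 2‖ ≤ δ * (2 + δ) * ψ := by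
    have e : ζ₁ ^ 2 - (x₁:ℂ) ^ 2 = (ζ₁ - (x₁:ℂ)) * ((ζ₁ - (x₁:ℂ)) + 2 * (x₁:ℂ)) := by ring
    rw [e, norm_mul]
    have hb : ‖(ζ₁ - (x₁:ℂ)) + 2 * (x₁:ℂ)‖ ≤ (2 + δ) * r := by
      calc ‖(ζ₁ - (x₁:ℂ)) + 2 * (x₁:ℂ)‖
          ≤ ‖ζ₁ - (x₁:ℂ)‖ + ‖2 * (x₁:ℂ)‖ := norm_add_le _ _
      _ ≤ δ * r + 2 * |x₁| := by
          rw [norm_mul, Complex.norm_two, Complex.norm_real, Real.norm_eq_abs]; linarith [h1]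
      _ ≤ (2 + δ) * r := by linarith [hx1]
    calc ‖ζ₁ - (x₁:ℂ)‖ * ‖(ζ₁ - (x₁:ℂ)) + 2 * (x₁:ℂ)‖
        ≤ (δ * r) * ((2 + δ) * r) := by
          apply mul_le_mul h1 hb (norm_nonneg _) (by positivity)
    _ = δ * (2 + δ) * ψ := by rw [← hr2]; ring
  -- estimate 2
  have key : ∀ i ∈ Finset.range (2 * k),
      ‖ζ₂ ^ i * (x₂:ℂ) ^ (2 * k - 1 - i)‖ ≤ ((1 + δ) * s) ^ (2 * k - 1) := by
    intro i hi
    rw [Finset.mem_range] at hi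
    rw [norm_mul, norm_pow, norm_pow, Complex.norm_real, Real.norm_eq_abs]
    have hxs : |x₂| ≤ (1 + δ) * s := hx2.trans (le_mul_of_one_le_left hspos.le (by linarith))
    calc ‖ζ₂‖ ^ i * |x₂| ^ (2 * k - 1 - i)
        ≤ ((1 + δ) * s) ^ i * ((1 + δ) * s) ^ (2 * k - 1 - i) := by
          apply mul_le_mul (pow_le_pow_left₀ (norm_nonneg _) hζ2 i)
            (pow_le_pow_left₀ (abs_nonneg _) hxs _) (by positivity) (by positivity)
    _ = ((1 + δ) * s) ^ (i + (2 * k - 1 - i)) := (pow_add _ _ _).symm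
    _ = ((1 + δ) * s) ^ (2 * k - 1) := by congr 1; omega
  have est2 : ‖ζ₂ ^ (2 * k) - (x₂:ℂ) ^ (2 * k)‖ ≤
      (2 * k) * δ * (1 + δ) ^ (2 * k - 1) * ψ := by
    rw [← geom_sum₂_mul ζ₂ ((x₂:ℂ)) (2 * k), norm_mul]
    have hsum : ‖∑ i ∈ Finset.range (2 * k), ζ₂ ^ i * (x₂:ℂ) ^ (2 * k - 1 - i)‖ ≤
        (2 * k) * ((1 + δ) * s) ^ (2 * k - 1) := by
      calc ‖∑ i ∈ Finset.range (2 * k), ζ₂ ^ i * (x₂:ℂ) ^ (2 * k - 1 - i)‖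
          ≤ ∑ i ∈ Finset.range (2 * k), ‖ζ₂ ^ i * (x₂:ℂ) ^ (2 * k - 1 - i)‖ :=
            norm_sum_le _ _
      _ ≤ ∑ _i ∈ Finset.range (2 * k), ((1 + δ) * s) ^ (2 * k - 1) := Finset.sum_le_sum key
      _ = (2 * k) * ((1 + δ) * s) ^ (2 * k - 1) := by
            rw [Finset.sum_const, Finset.card_range, nsmul_eq_mul]; push_cast; ring
    calc ‖∑ i ∈ Finset.range (2 * k), ζ₂ ^ i * (x₂:ℂ) ^ (2 * k - 1 - i)‖ *
          ‖ζ₂ - (x₂:ℂ)‖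
        ≤ ((2 * k) * ((1 + δ) * s) ^ (2 * k - 1)) * (δ * s) := by
          apply mul_le_mul hsum h2 (norm_nonneg _) (by positivity)
    _ = (2 * k) * δ * (1 + δ) ^ (2 * k - 1) * (s ^ (2 * k - 1) * s) := by
          rw [mul_pow]; ring
    _ = (2 * k) * δ * (1 + δ) ^ (2 * k - 1) * ψ := by
          rw [← pow_succ, (by omega : 2 * k - 1 + 1 = 2 * k), hs2k]
  -- (1+δ)^(2k-1) ≤ 2 and total bound
  have hδD : δ * ((2:ℝ) ^ (2 * k + 1) + 4) = 1 := inv_mul_cancel₀ hD.ne'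
  have h2k1 : (2:ℝ) ^ (2 * k + 1) = 2 * 2 ^ (2 * k) := by rw [pow_succ]; ring
  have hhalf : δ * ((2:ℝ) ^ (2 * k) + 2) = 1 / 2 := by rw [h2k1] at hδD; linarith
  have h2kδ : 2 * (k:ℝ) * δ ≤ 1 / 2 := by
    have h := mul_le_mul_of_nonneg_left
      (by linarith [hpow] : 2 * (k:ℝ) ≤ (2:ℝ) ^ (2 * k) + 2) hδpos.le
    linarith [h, hhalf]
  have hnδ : ((2 * k - 1 : ℕ) : ℝ) * δ ≤ 1 / 2 := by
    have hn : ((2 * k - 1 : ℕ) : ℝ) ≤ 2 * (k:ℝ) := by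
      have h := Nat.sub_le (2 * k) 1
      exact_mod_cast (Nat.cast_le.mpr h).trans_eq (by push_cast; ring)
    have := mul_le_mul_of_nonneg_right hn hδpos.le
    linarith
  have hbern : (1:ℝ) / 2 ≤ (1 - δ) ^ (2 * k - 1) := by
    have hB := one_add_mul_le_pow (a := -δ) (by linarith : (-2:ℝ) ≤ -δ) (2 * k - 1)
    rw [mul_neg, ← sub_eq_add_neg, ← sub_eq_add_neg] at hB
    linarith [hnδ]
  have hδsq : δ ^ 2 ≤ 1 := by
    have h := mul_le_mul hδ1 hδ1 hδpos.le zero_le_one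
    calc δ ^ 2 = δ * δ := sq δ
    _ ≤ 1 * 1 := h
    _ = 1 := by ring
  have hab : (1 + δ) ^ (2 * k - 1) * (1 - δ) ^ (2 * k - 1) ≤ 1 := by
    rw [← mul_pow]
    have e : (1 + δ) * (1 - δ) = 1 - δ ^ 2 := by ring
    rw [e]
    exact pow_le_one₀ (by linarith) (by linarith [sq_nonneg δ])
  have h1δ2 : (1 + δ) ^ (2 * k - 1) ≤ 2 := by
    have hbpos : (0:ℝ) < (1 - δ) ^ (2 * k - 1) := lt_of_lt_of_le one_half_pos hbern
    have h' : (1 + δ) ^ (2 * k - 1) ≤ 1 / (1 - δ) ^ (2 * k - 1) := (le_div_iff₀ hbpos).mpr hab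
    have h'' : 1 / (1 - δ) ^ (2 * k - 1) ≤ 2 := by rw [div_le_iff₀ hbpos]; linarith [hbern]
    linarith
  have hstep : (2 * (k:ℝ)) * δ * (1 + δ) ^ (2 * k - 1) * ψ ≤ 4 * (k:ℝ) * δ * ψ := by
    calc (2 * (k:ℝ)) * δ * (1 + δ) ^ (2 * k - 1) * ψ
        = (2 * (k:ℝ) * δ * ψ) * (1 + δ) ^ (2 * k - 1) := by ring
    _ ≤ (2 * (k:ℝ) * δ * ψ) * 2 := mul_le_mul_of_nonneg_left h1δ2 (by positivity)
    _ = 4 * (k:ℝ) * δ * ψ := by ring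
  have hmain : δ * (2 + δ) + 4 * (k:ℝ) * δ ≤ 1 / 2 := by
    have hside : δ * (2 + δ + 4 * (k:ℝ)) ≤ δ * ((2 ^ (2 * k) : ℝ) + 2) := by
      apply mul_le_mul_of_nonneg_left _ hδpos.le
      linarith [hpow, hδ1]
    have e : δ * (2 + δ) + 4 * (k:ℝ) * δ = δ * (2 + δ + 4 * (k:ℝ)) := by ring
    linarith [hside, hhalf]
  have htot : δ * (2 + δ) * ψ + (2 * (k:ℝ)) * δ * (1 + δ) ^ (2 * k - 1) * ψ ≤ ψ / 2 := by
    have h := mul_le_mul_of_nonneg_right hmain hx.le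
    calc δ * (2 + δ) * ψ + (2 * (k:ℝ)) * δ * (1 + δ) ^ (2 * k - 1) * ψ
        ≤ δ * (2 + δ) * ψ + 4 * (k:ℝ) * δ * ψ := by linarith [hstep]
    _ = (δ * (2 + δ) + 4 * (k:ℝ) * δ) * ψ := by ring
    _ ≤ 1 / 2 * ψ := h
    _ = ψ / 2 := by ring
  -- assemble
  have habs_x : ‖(x₁:ℂ) ^ 2 + (x₂:ℂ) ^ (2 * k)‖ = ψ := by
    have e : ((x₁:ℂ) ^ 2 + (x₂:ℂ) ^ (2 * k)) = ((ψ : ℝ) : ℂ) := by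
      rw [hψdef]; push_cast; ring
    rw [e, Complex.norm_real, Real.norm_eq_abs, abs_of_pos hx]
  have hdiff : ‖((x₁:ℂ) ^ 2 + (x₂:ℂ) ^ (2 * k)) - (ζ₁ ^ 2 + ζ₂ ^ (2 * k))‖ ≤ ψ / 2 := by
    have e : ((x₁:ℂ) ^ 2 + (x₂:ℂ) ^ (2 * k)) - (ζ₁ ^ 2 + ζ₂ ^ (2 * k)) =
        ((x₁:ℂ) ^ 2 - ζ₁ ^ 2) + ((x₂:ℂ) ^ (2 * k) - ζ₂ ^ (2 * k)) := by ring
    calc ‖((x₁:ℂ) ^ 2 + (x₂:ℂ) ^ (2 * k)) - (ζ₁ ^ 2 + ζ₂ ^ (2 * k))‖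
        ≤ ‖(x₁:ℂ) ^ 2 - ζ₁ ^ 2‖ + ‖(x₂:ℂ) ^ (2 * k) - ζ₂ ^ (2 * k)‖ := by
          rw [e]; exact norm_add_le _ _
    _ = ‖ζ₁ ^ 2 - (x₁:ℂ) ^ 2‖ + ‖ζ₂ ^ (2 * k) - (x₂:ℂ) ^ (2 * k)‖ := by
          rw [norm_sub_rev, norm_sub_rev ((x₂:ℂ) ^ (2*k))]
    _ ≤ δ * (2 + δ) * ψ + (2 * k) * δ * (1 + δ) ^ (2 * k - 1) * ψ := add_le_add est1 est2
    _ ≤ ψ / 2 := htot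
  have tri : ‖(x₁:ℂ) ^ 2 + (x₂:ℂ) ^ (2 * k)‖ ≤
      ‖((x₁:ℂ) ^ 2 + (x₂:ℂ) ^ (2 * k)) - (ζ₁ ^ 2 + ζ₂ ^ (2 * k))‖ +
      ‖ζ₁ ^ 2 + ζ₂ ^ (2 * k)‖ := by
    have e : (x₁:ℂ) ^ 2 + (x₂:ℂ) ^ (2 * k) =
        (((x₁:ℂ) ^ 2 + (x₂:ℂ) ^ (2 * k)) - (ζ₁ ^ 2 + ζ₂ ^ (2 * k))) + (ζ₁ ^ 2 + ζ₂ ^ (2 * k)) := by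
      ring
    calc ‖(x₁:ℂ) ^ 2 + (x₂:ℂ) ^ (2 * k)‖ =
        ‖(((x₁:ℂ) ^ 2 + (x₂:ℂ) ^ (2 * k)) - (ζ₁ ^ 2 + ζ₂ ^ (2 * k))) +
          (ζ₁ ^ 2 + ζ₂ ^ (2 * k))‖ := by rw [← e]
    _ ≤ _ := norm_add_le _ _
  rw [habs_x] at tri
  linarith
end

section
/- Let k ≥ 2 be an integer, let ψ : ℝ² → ℝ be defined by ψ(x) = x₁² + x₂^{2k}, and put δ = (2^{2k+1} + 4)^{-1}. Then for every x ∈ ℝ² with 0 < |x₁| < 1 and all integers i, j ≥ 0, one has |∂^{i+j}(1/ψ)/∂x₁^i ∂x₂^j (x)| ≤ 2·δ^{−(i+j)}·i!·j!·|x₁|^{−(i+j+2)}. -/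
open scoped BigOperators Topology
open Metric Set

section Aux

set_option maxHeartbeats 1000000
open scoped Real


noncomputable def Dpow (u : ℂ × ℂ) : ℕ → ((ℂ × ℂ) → ℂ) → (ℂ × ℂ) → ℂ
  | 0, G => G
  | n+1, G => fun z => fderiv ℂ (Dpow u n G) z u

noncomputable def Cvec : (N : ℕ) → (Fin N → ℂ × ℂ) → ((ℂ × ℂ) → ℂ) → (ℂ × ℂ) → ℂ
  | 0, _, G => G
  | N+1, v, G => fun z => fderiv ℂ (Cvec N (Fin.tail v) G) z (v 0)

lemma Dpow_analytic {U : Set (ℂ × ℂ)} {G : ℂ × ℂ → ℂ} (hG : AnalyticOnNhd ℂ G U)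
    (hU : IsOpen U) (u : ℂ × ℂ) : ∀ n, AnalyticOnNhd ℂ (Dpow u n G) U := by
  intro n
  induction n with
  | zero => exact hG
  | succ n ih =>
    intro z hz
    exact (((ContinuousLinearMap.apply ℂ ℂ u).analyticAt _).comp ((ih.fderiv) z hz))

lemma Cvec_eq_iteratedFDeriv {U : Set (ℂ × ℂ)} {G : ℂ × ℂ → ℂ} (hG : AnalyticOnNhd ℂ G U)
    (hU : IsOpen U) : ∀ N (v : Fin N → ℂ × ℂ) (z : ℂ × ℂ), z ∈ U →
    iteratedFDeriv ℂ N G z v = Cvec N v G z := by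
  intro N
  induction N with
  | zero => intro v z hz; simp [Cvec, iteratedFDeriv_zero_apply]
  | succ N ih =>
    intro v z hz
    rw [iteratedFDeriv_succ_apply_left]
    have hd : DifferentiableAt ℂ (iteratedFDeriv ℂ N G) z :=
      ((hG.iteratedFDeriv_of_isOpen hU N) z hz).differentiableAt
    rw [← fderiv_continuousMultilinear_apply_const_apply hd (Fin.tail v) (v 0)]
    have hev : (fun y => iteratedFDeriv ℂ N G y (Fin.tail v)) =ᶠ[𝓝 z]
        (Cvec N (Fin.tail v) G) := by
      filter_upwards [hU.mem_nhds hz] with y hy using ih (Fin.tail v) y hy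
    rw [hev.fderiv_eq]
    rfl

lemma Cvec_pattern (u w : ℂ × ℂ) :
    ∀ N i j, N = i + j → ∀ (v : Fin N → ℂ × ℂ),
    (∀ t : Fin N, v t = if (t : ℕ) < i then u else w) →
    ∀ G, Cvec N v G = Dpow u i (Dpow w j G) := by
  intro N
  induction N with
  | zero =>
    intro i j hN v hv G
    obtain ⟨hi, hj⟩ : i = 0 ∧ j = 0 := by omega
    subst hi; subst hj; rfl
  | succ N ih =>
    intro i j hN v hv G
    match i with
    | 0 =>
      have hj : j = N + 1 := by omega
      subst hj
      show (fun z => fderiv ℂ (Cvec N (Fin.tail v) G) z (v 0)) = _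
      have h0 : v 0 = w := by simpa using hv 0
      have htail : Cvec N (Fin.tail v) G = Dpow u 0 (Dpow w N G) := by
        refine ih 0 N (by omega) _ (fun t => ?_) G
        simpa [Fin.tail] using hv t.succ
      rw [h0, htail]
      rfl
    | i' + 1 =>
      have hN' : N = i' + j := by omega
      show (fun z => fderiv ℂ (Cvec N (Fin.tail v) G) z (v 0)) = _
      have h0 : v 0 = u := by simpa using hv 0
      have htail : Cvec N (Fin.tail v) G = Dpow u i' (Dpow w j G) := by
        refine ih i' j hN' _ (fun t => ?_) G
        have := hv t.succ
        simpa [Fin.tail, Nat.succ_lt_succ_iff] using this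
      rw [h0, htail]
      rfl

lemma fderiv_dir_snd {Φ : ℂ × ℂ → ℂ} {w u : ℂ} (h : DifferentiableAt ℂ Φ (w, u)) :
    fderiv ℂ Φ (w, u) (0, 1) = deriv (fun t => Φ (w, t)) u := by
  have h2 : HasDerivAt (fun t : ℂ => ((w, t) : ℂ × ℂ)) (0, 1) u :=
    HasDerivAt.prodMk (hasDerivAt_const u w) (hasDerivAt_id u)
  exact (h.hasFDerivAt.comp_hasDerivAt u h2).deriv.symm

lemma fderiv_dir_fst {Φ : ℂ × ℂ → ℂ} {w u : ℂ} (h : DifferentiableAt ℂ Φ (w, u)) :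
    fderiv ℂ Φ (w, u) (1, 0) = deriv (fun t => Φ (t, u)) w := by
  have h2 : HasDerivAt (fun t : ℂ => ((t, u) : ℂ × ℂ)) (1, 0) w :=
    HasDerivAt.prodMk (hasDerivAt_id w) (hasDerivAt_const w u)
  exact (h.hasFDerivAt.comp_hasDerivAt w h2).deriv.symm

lemma Dpow_snd {U : Set (ℂ × ℂ)} {G : ℂ × ℂ → ℂ} (hG : AnalyticOnNhd ℂ G U) (hU : IsOpen U) :
    ∀ j (w u : ℂ), (w, u) ∈ U →
      Dpow (0, 1) j G (w, u) = iteratedDeriv j (fun t => G (w, t)) u := by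
  intro j
  induction j with
  | zero => intro w u _; simp [Dpow, iteratedDeriv_zero]
  | succ j ih =>
    intro w u hz
    show fderiv ℂ (Dpow (0, 1) j G) (w, u) (0, 1) = _
    rw [fderiv_dir_snd ((Dpow_analytic hG hU _ j (w, u) hz).differentiableAt)]
    have hcont : Continuous fun t : ℂ => ((w, t) : ℂ × ℂ) :=
      continuous_const.prodMk continuous_id
    have hev : (fun t => Dpow (0, 1) j G (w, t)) =ᶠ[𝓝 u]
        fun t => iteratedDeriv j (fun s => G (w, s)) t := by
      filter_upwards [hcont.continuousAt.preimage_mem_nhds (hU.mem_nhds hz)] with t ht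
      exact ih w t ht
    rw [hev.deriv_eq, ← iteratedDeriv_succ]

lemma Dpow_fst {U : Set (ℂ × ℂ)} {G : ℂ × ℂ → ℂ} (hG : AnalyticOnNhd ℂ G U) (hU : IsOpen U) :
    ∀ i (w u : ℂ), (w, u) ∈ U →
      Dpow (1, 0) i G (w, u) = iteratedDeriv i (fun t => G (t, u)) w := by
  intro i
  induction i with
  | zero => intro w u _; simp [Dpow, iteratedDeriv_zero]
  | succ i ih =>
    intro w u hz
    show fderiv ℂ (Dpow (1, 0) i G) (w, u) (1, 0) = _
    rw [fderiv_dir_fst ((Dpow_analytic hG hU _ i (w, u) hz).differentiableAt)]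
    have hcont : Continuous fun t : ℂ => ((t, u) : ℂ × ℂ) :=
      continuous_id.prodMk continuous_const
    have hev : (fun t => Dpow (1, 0) i G (t, u)) =ᶠ[𝓝 w]
        fun t => iteratedDeriv i (fun s => G (s, u)) t := by
      filter_upwards [hcont.continuousAt.preimage_mem_nhds (hU.mem_nhds hz)] with t ht
      exact ih t u ht
    rw [hev.deriv_eq, ← iteratedDeriv_succ]

lemma cauchy_bound {f : ℂ → ℂ} {c : ℂ} {M : ℝ} {r : ℝ} (hr : 0 < r)
    (hf : DifferentiableOn ℂ f (closedBall c r))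
    (hM : ∀ z ∈ sphere c r, ‖f z‖ ≤ M) (n : ℕ) :
    ‖iteratedDeriv n f c‖ ≤ n.factorial * M / r ^ n := by
  lift r to NNReal using hr.le with R
  have hR0 : 0 < R := by exact_mod_cast hr
  have h := hf.hasFPowerSeriesOnBall hR0
  have heq : iteratedDeriv n f c = n.factorial • (cauchyPowerSeries f c R n fun _ => 1) := by
    rw [iteratedDeriv_eq_iteratedFDeriv, ← h.factorial_smul (y := (1:ℂ)) n]
  have hM0 : 0 ≤ M := by
    obtain ⟨z, hz⟩ : (sphere c (R:ℝ)).Nonempty := NormedSpace.sphere_nonempty.mpr hr.le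
    exact le_trans (norm_nonneg _) (hM z hz)
  have hcont : ContinuousOn (fun θ : ℝ => ‖f (circleMap c R θ)‖) (uIcc 0 (2*π)) := by
    apply ContinuousOn.norm
    exact hf.continuousOn.comp (continuous_circleMap c R).continuousOn
      (fun θ _ => sphere_subset_closedBall (circleMap_mem_sphere c hr.le θ))
  have hint : (∫ θ : ℝ in (0)..2*π, ‖f (circleMap c R θ)‖) ≤ 2 * π * M := by
    have h2 : (∫ θ : ℝ in (0)..2*π, M) = 2 * π * M := by
      rw [intervalIntegral.integral_const, smul_eq_mul]; ring
    rw [← h2]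
    apply intervalIntegral.integral_mono_on Real.two_pi_pos.le
    · exact hcont.intervalIntegrable
    · exact intervalIntegrable_const
    · intro θ _; exact hM _ (circleMap_mem_sphere c hr.le θ)
  have hcoeff : ‖cauchyPowerSeries f c R n fun _ => 1‖ ≤ M / (R:ℝ) ^ n := by
    calc ‖cauchyPowerSeries f c R n fun _ => 1‖
        ≤ ‖cauchyPowerSeries f c R n‖ * ∏ _i : Fin n, ‖(1:ℂ)‖ :=
          (cauchyPowerSeries f c R n).le_opNorm _
      _ = ‖cauchyPowerSeries f c R n‖ := by simp
      _ ≤ ((2 * π)⁻¹ * ∫ θ : ℝ in (0)..2*π, ‖f (circleMap c R θ)‖) * |(R:ℝ)|⁻¹ ^ n :=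
          norm_cauchyPowerSeries_le f c R n
      _ ≤ ((2 * π)⁻¹ * (2 * π * M)) * |(R:ℝ)|⁻¹ ^ n := by
          apply mul_le_mul_of_nonneg_right
          · exact mul_le_mul_of_nonneg_left hint (by positivity)
          · positivity
      _ = M / (R:ℝ) ^ n := by
          rw [abs_of_nonneg hr.le, inv_pow]
          rw [inv_mul_cancel_left₀ (by positivity : (2*π) ≠ (0:ℝ))]
          rw [div_eq_mul_inv]
  calc ‖iteratedDeriv n f c‖ = n.factorial * ‖cauchyPowerSeries f c R n fun _ => 1‖ := by
        rw [heq, nsmul_eq_mul, norm_mul]; simp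
    _ ≤ n.factorial * (M / (R:ℝ) ^ n) := by
        apply mul_le_mul_of_nonneg_left hcoeff (by positivity)
    _ = n.factorial * M / (R:ℝ) ^ n := by ring

noncomputable def iotaE : EuclideanSpace ℝ (Fin 2) →L[ℝ] ℂ × ℂ :=
  (Complex.ofRealCLM.comp (EuclideanSpace.proj 0)).prod
    (Complex.ofRealCLM.comp (EuclideanSpace.proj 1))

lemma iotaE_apply (y : EuclideanSpace ℝ (Fin 2)) : iotaE y = ((y 0 : ℂ), (y 1 : ℂ)) := rfl

lemma real_of_complex {U : Set (ℂ × ℂ)} (hU : IsOpen U) {G : ℂ × ℂ → ℂ}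
    (hG : AnalyticOnNhd ℂ G U) {x : EuclideanSpace ℝ (Fin 2)} (hx : iotaE x ∈ U)
    (N : ℕ) (m : Fin N → EuclideanSpace ℝ (Fin 2)) :
    iteratedFDeriv ℝ N (fun y => (G (iotaE y)).re) x m
      = (iteratedFDeriv ℂ N G (iotaE x) (fun t => iotaE (m t))).re := by
  have hVopen : IsOpen (iotaE ⁻¹' U) := hU.preimage iotaE.continuous
  have hxV : x ∈ iotaE ⁻¹' U := hx
  have hGC : ContDiffOn ℂ ⊤ G U := hG.contDiffOn hU.uniqueDiffOn
  have hGR : ContDiffOn ℝ (⊤ : ℕ∞) G U := (hGC.restrict_scalars ℝ).of_le le_top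
  have hcomp : ContDiffOn ℝ (⊤ : ℕ∞) (G ∘ iotaE) (iotaE ⁻¹' U) :=
    hGR.comp (iotaE.contDiff.contDiffOn) (fun y hy => hy)
  have hA := Complex.reCLM.iteratedFDerivWithin_comp_left (f := G ∘ iotaE) (hcomp x hxV)
    hVopen.uniqueDiffOn hxV (WithTop.coe_le_coe.mpr (le_top : (N : ℕ∞) ≤ ⊤) : (N : WithTop ℕ∞) ≤ ((⊤ : ℕ∞) : WithTop ℕ∞))
  have hB := iotaE.iteratedFDerivWithin_comp_right hGR hU.uniqueDiffOn hVopen.uniqueDiffOn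
    hx (WithTop.coe_le_coe.mpr (le_top : (N : ℕ∞) ≤ ⊤) : (N : WithTop ℕ∞) ≤ ((⊤ : ℕ∞) : WithTop ℕ∞))
  have hC : iteratedFDerivWithin ℝ N G U (iotaE x)
      = (iteratedFDerivWithin ℂ N G U (iotaE x)).restrictScalars ℝ := by
    have hT := (hGC.ftaylorSeriesWithin hU.uniqueDiffOn).restrictScalars ℝ
    exact (hT.eq_iteratedFDerivWithin_of_uniqueDiffOn
      ((by simp) : (N : WithTop ℕ∞) ≤ ⊤) hU.uniqueDiffOn hx).symm
  calc iteratedFDeriv ℝ N (fun y => (G (iotaE y)).re) x m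
      = iteratedFDerivWithin ℝ N (⇑Complex.reCLM ∘ (G ∘ ⇑iotaE)) (iotaE ⁻¹' U) x m := by
        rw [iteratedFDerivWithin_of_isOpen N hVopen hxV]; rfl
    _ = (iteratedFDerivWithin ℝ N (G ∘ ⇑iotaE) (iotaE ⁻¹' U) x m).re := by rw [hA]; rfl
    _ = (iteratedFDerivWithin ℝ N G U (iotaE x) (fun t => iotaE (m t))).re := by rw [hB]; rfl
    _ = (iteratedFDerivWithin ℂ N G U (iotaE x) (fun t => iotaE (m t))).re := by rw [hC]; rfl
    _ = (iteratedFDeriv ℂ N G (iotaE x) (fun t => iotaE (m t))).re := by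
        rw [iteratedFDerivWithin_of_isOpen N hU hx]

lemma one_add_pow_le {x : ℝ} (hx : 0 ≤ x) : ∀ m : ℕ, (m : ℝ) * x ≤ 1/2 →
    (1 + x) ^ m ≤ 1 + 2 * m * x := by
  intro m
  induction m with
  | zero => simp
  | succ m ih =>
    intro h
    have hmx : (m : ℝ) * x ≤ 1/2 := by
      refine le_trans ?_ h; push_cast; nlinarith
    have h1 := ih hmx
    have hp : (0:ℝ) ≤ (1 + x) := by linarith
    have h2 : (1+x)^(m+1) = (1+x)^m * (1+x) := pow_succ _ _
    push_cast
    nlinarith [mul_le_mul_of_nonneg_right h1 hp]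

lemma sixteen_le (k : ℕ) (hk : 2 ≤ k) : 16 * k ≤ 2 ^ (2 * k + 1) := by
  induction k with
  | zero => omega
  | succ n ih =>
    rcases Nat.lt_or_ge n 2 with h | h
    · interval_cases n
      · omega
      · norm_num
    · have h1 := ih h
      have h2 : 2 ^ (2 * (n+1) + 1) = 4 * 2 ^ (2*n+1) := by
        rw [show 2*(n+1)+1 = (2*n+1)+2 by ring, pow_add]; ring
      omega

lemma psi_lower {k : ℕ} (hk : 2 ≤ k) {a b : ℝ} (ha : a ≠ 0) (ha1 : |a| < 1)
    {z₁ z₂ : ℂ} (h1 : dist z₁ (a : ℂ) ≤ ((2:ℝ)^(2*k+1)+4)⁻¹ * |a|)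
    (h2 : dist z₂ (b : ℂ) ≤ ((2:ℝ)^(2*k+1)+4)⁻¹ * |a|) :
    a^2 / 2 ≤ ‖z₁^2 + z₂^(2*k)‖ := by
  set δ : ℝ := ((2:ℝ)^(2*k+1)+4)⁻¹ with hδ
  set r : ℝ := δ * |a| with hr
  have hapos : 0 < |a| := abs_pos.mpr ha
  have hpow32 : (32:ℝ) ≤ 2^(2*k+1) := by
    calc (32:ℝ) = 2^5 := by norm_num
    _ ≤ 2^(2*k+1) := by apply pow_le_pow_right₀ one_le_two; omega
  have hδpos : 0 < δ := by rw [hδ]; positivity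
  have hδ36 : δ ≤ 1/36 := by
    rw [hδ]; rw [show (1:ℝ)/36 = 36⁻¹ by norm_num]
    apply inv_anti₀ (by norm_num) (by linarith)
  have h2k : 2 * (k:ℝ) * δ ≤ 1/8 := by
    have h16 : (16:ℝ) * k ≤ 2^(2*k+1) := by exact_mod_cast sixteen_le k hk
    rw [hδ]
    rw [show (2:ℝ) * k * ((2:ℝ)^(2*k+1)+4)⁻¹ = (2*k) / ((2:ℝ)^(2*k+1)+4) by ring]
    rw [div_le_iff₀ (by linarith)]
    linarith
  have hrpos : 0 < r := by positivity
  have hbk : 0 ≤ b^(2*k) := by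
    rw [show 2*k = k*2 by ring, pow_mul]; positivity
  set ψ : ℝ := a^2 + b^(2*k) with hψ
  have hψa : a^2 ≤ ψ := by rw [hψ]; linarith
  have hψpos : 0 < ψ := by
    have h0 : 0 < a^2 := by positivity
    linarith
  have hna : ‖(a:ℂ)‖ = |a| := by simp [Complex.norm_real]
  have hz1 : ‖z₁ - (a:ℂ)‖ ≤ r := by rw [← dist_eq_norm]; exact h1
  have hd1 : ‖z₁^2 - (a:ℂ)^2‖ ≤ ψ/4 := by
    have hfact : z₁^2 - (a:ℂ)^2 = (z₁ - a) * (z₁ + a) := by ring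
    have hza : ‖z₁ + (a:ℂ)‖ ≤ r + 2*|a| := by
      have h2a : ‖(2 * (a:ℂ))‖ = 2*|a| := by
        rw [norm_mul, hna]; norm_num
      calc ‖z₁ + (a:ℂ)‖ = ‖(z₁ - a) + 2*(a:ℂ)‖ := by congr 1; ring
      _ ≤ ‖z₁ - (a:ℂ)‖ + ‖2*(a:ℂ)‖ := norm_add_le _ _
      _ ≤ r + 2*|a| := by rw [h2a]; linarith
    calc ‖z₁^2 - (a:ℂ)^2‖ = ‖z₁ - (a:ℂ)‖ * ‖z₁ + (a:ℂ)‖ := by rw [hfact, norm_mul]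
    _ ≤ r * (r + 2*|a|) := by
        apply mul_le_mul hz1 hza (norm_nonneg _) hrpos.le
    _ = δ*(δ+2) * a^2 := by rw [hr]; rw [← sq_abs a]; ring
    _ ≤ (1/4) * a^2 := by
        have hδsmall : δ*(δ+2) ≤ 1/4 := by nlinarith
        exact mul_le_mul_of_nonneg_right hδsmall (sq_nonneg a)
    _ ≤ ψ/4 := by linarith
  have hnb : ‖(b:ℂ)‖ = |b| := by simp [Complex.norm_real]
  have hz2 : ‖z₂ - (b:ℂ)‖ ≤ r := by rw [← dist_eq_norm]; exact h2
  have hz2n : ‖z₂‖ ≤ |b| + r := by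
    calc ‖z₂‖ = ‖(z₂ - b) + (b:ℂ)‖ := by ring_nf
    _ ≤ ‖z₂ - (b:ℂ)‖ + ‖(b:ℂ)‖ := norm_add_le _ _
    _ ≤ |b| + r := by rw [hnb]; linarith
  set M : ℝ := |b| + r with hM
  have hMpos : 0 < M := by positivity
  have hd2' : ‖z₂^(2*k) - (b:ℂ)^(2*k)‖ ≤ (2*k) * M^(2*k-1) * r := by
    have hid : (∑ i ∈ Finset.range (2*k), z₂ ^ i * (b:ℂ) ^ (2*k - 1 - i)) * (z₂ - b)
        = z₂ ^ (2*k) - (b:ℂ) ^ (2*k) := geom_sum₂_mul z₂ (b:ℂ) (2*k)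
    rw [← hid, norm_mul]
    have hsum : ‖∑ i ∈ Finset.range (2*k), z₂ ^ i * (b:ℂ) ^ (2*k - 1 - i)‖
        ≤ (2*k) * M^(2*k-1) := by
      calc ‖∑ i ∈ Finset.range (2*k), z₂ ^ i * (b:ℂ) ^ (2*k - 1 - i)‖
          ≤ ∑ i ∈ Finset.range (2*k), ‖z₂ ^ i * (b:ℂ) ^ (2*k - 1 - i)‖ :=
            norm_sum_le _ _
        _ ≤ ∑ i ∈ Finset.range (2*k), M^(2*k-1) := by
            apply Finset.sum_le_sum
            intro i hi
            have hi' : i ≤ 2*k - 1 := by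
              have := Finset.mem_range.mp hi; omega
            rw [norm_mul, norm_pow, norm_pow, hnb]
            calc ‖z₂‖^i * |b|^(2*k-1-i) ≤ M^i * M^(2*k-1-i) := by
                  apply mul_le_mul (pow_le_pow_left₀ (norm_nonneg _) hz2n i)
                    (pow_le_pow_left₀ (abs_nonneg _) (by rw [hM]; linarith) _)
                    (by positivity) (by positivity)
              _ = M^(2*k-1) := by rw [← pow_add]; congr 1; omega
        _ = (2*k) * M^(2*k-1) := by
            rw [Finset.sum_const, Finset.card_range]; push_cast; ring
    calc ‖∑ i ∈ Finset.range (2*k), z₂ ^ i * (b:ℂ) ^ (2*k - 1 - i)‖ * ‖z₂ - (b:ℂ)‖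
        ≤ ((2*k) * M^(2*k-1)) * r := by
          apply mul_le_mul hsum hz2 (norm_nonneg _) (by positivity)
      _ = (2*k) * M^(2*k-1) * r := by ring
  have honepow : (1+δ)^(2*k-1) ≤ 5/4 := by
    have hcast : ((2*k-1 : ℕ) : ℝ) ≤ 2*(k:ℝ) := by
      push_cast [Nat.cast_sub (by omega : 1 ≤ 2*k)]; linarith
    have hmx : ((2*k-1 : ℕ) : ℝ) * δ ≤ 1/2 := by nlinarith
    have := one_add_pow_le hδpos.le (2*k-1) hmx
    have h2' : 2 * ((2*k-1 : ℕ) : ℝ) * δ ≤ 1/4 := by nlinarith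
    linarith
  have hd2 : ‖z₂^(2*k) - (b:ℂ)^(2*k)‖ ≤ ψ/4 := by
    rcases le_total (|b|) (|a|) with hba | hab
    · have hMle : M ≤ (1+δ) * |a| := by rw [hM, hr]; nlinarith
      have hMp : M^(2*k-1) ≤ (1+δ)^(2*k-1) * |a|^(2*k-1) := by
        rw [← mul_pow]
        exact pow_le_pow_left₀ hMpos.le hMle _
      have hapow : |a|^(2*k-1) * |a| ≤ a^2 := by
        rw [← pow_succ]
        have h2k1 : 2*k - 1 + 1 = 2*k := by omega
        rw [h2k1, ← sq_abs]
        exact pow_le_pow_of_le_one (abs_nonneg a) ha1.le (by omega)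
      calc ‖z₂^(2*k) - (b:ℂ)^(2*k)‖ ≤ (2*k) * M^(2*k-1) * r := hd2'
        _ ≤ (2*k) * ((1+δ)^(2*k-1) * |a|^(2*k-1)) * (δ * |a|) := by
            apply mul_le_mul _ le_rfl hrpos.le (by positivity)
            exact mul_le_mul_of_nonneg_left hMp (by positivity)
        _ = (2*(k:ℝ)*δ) * (1+δ)^(2*k-1) * (|a|^(2*k-1) * |a|) := by ring
        _ ≤ (1/8) * (5/4) * a^2 := by
            apply mul_le_mul _ hapow (by positivity) (by norm_num)
            apply mul_le_mul h2k honepow (by positivity) (by norm_num)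
        _ ≤ ψ/4 := by linarith
    · have hMle : M ≤ (1+δ) * |b| := by rw [hM, hr]; nlinarith
      have hMp : M^(2*k-1) ≤ (1+δ)^(2*k-1) * |b|^(2*k-1) := by
        rw [← mul_pow]
        exact pow_le_pow_left₀ hMpos.le hMle _
      have hbpow : |b|^(2*k-1) * |a| ≤ |b|^(2*k-1) * |b| := by
        apply mul_le_mul_of_nonneg_left hab (by positivity)
      have hbeq : |b|^(2*k-1) * |b| = b^(2*k) := by
        rw [← pow_succ]
        have h2k1 : 2*k - 1 + 1 = 2*k := by omega
        rw [h2k1, ← abs_pow, abs_of_nonneg hbk]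
      calc ‖z₂^(2*k) - (b:ℂ)^(2*k)‖ ≤ (2*k) * M^(2*k-1) * r := hd2'
        _ ≤ (2*k) * ((1+δ)^(2*k-1) * |b|^(2*k-1)) * (δ * |a|) := by
            apply mul_le_mul _ le_rfl hrpos.le (by positivity)
            exact mul_le_mul_of_nonneg_left hMp (by positivity)
        _ = (2*(k:ℝ)*δ) * (1+δ)^(2*k-1) * (|b|^(2*k-1) * |a|) := by ring
        _ ≤ (1/8) * (5/4) * b^(2*k) := by
            apply mul_le_mul _ (hbpow.trans hbeq.le) (by positivity) (by norm_num)
            apply mul_le_mul h2k honepow (by positivity) (by norm_num)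
        _ ≤ ψ/4 := by rw [hψ]; nlinarith [sq_nonneg a]
  have hdecomp : ((ψ : ℝ) : ℂ)
      = (z₁^2 + z₂^(2*k)) - (z₁^2 - (a:ℂ)^2) - (z₂^(2*k) - (b:ℂ)^(2*k)) := by
    rw [hψ]; push_cast; ring
  have hψn : ‖((ψ : ℝ) : ℂ)‖ = ψ := by
    rw [Complex.norm_real, Real.norm_eq_abs, abs_of_pos hψpos]
  have htri : ψ ≤ ‖z₁^2 + z₂^(2*k)‖ + ψ/4 + ψ/4 := by
    calc ψ = ‖((ψ : ℝ) : ℂ)‖ := hψn.symm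
    _ ≤ ‖z₁^2 + z₂^(2*k)‖ + ‖z₁^2 - (a:ℂ)^2‖ + ‖z₂^(2*k) - (b:ℂ)^(2*k)‖ := by
        rw [hdecomp]
        exact le_trans (norm_sub_le _ _) (by gcongr; exact norm_sub_le _ _)
    _ ≤ ‖z₁^2 + z₂^(2*k)‖ + ψ/4 + ψ/4 := by gcongr
  linarith

end Aux

set_option maxHeartbeats 1000000

/-- Cauchy estimates for `1/ψ` with `ψ(x) = x₁² + x₂^{2k}`:
`|∂^{i+j}(1/ψ)/∂x₁^i ∂x₂^j (x)| ≤ 2 δ^{-(i+j)} i! j! |x₁|^{-(i+j+2)}` for `0 < |x₁| < 1`,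
where `δ = (2^{2k+1} + 4)⁻¹`. -/
theorem stmt_16 (k : ℕ) (hk : 2 ≤ k) (i j : ℕ) (x : EuclideanSpace ℝ (Fin 2))
    (hx0 : x 0 ≠ 0) (hx1 : |x 0| < 1) :
    |DJ (fun m : Fin 2 => if m = 0 then i else j)
        (fun y : EuclideanSpace ℝ (Fin 2) => ((y 0) ^ 2 + (y 1) ^ (2 * k))⁻¹) x| ≤
      2 * ((2:ℝ) ^ (2 * k + 1) + 4) ^ (i + j) * (Nat.factorial i : ℝ) *
        (Nat.factorial j : ℝ) * (|x 0| ^ (i + j + 2))⁻¹ := by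
  have hL : ((List.finRange 2).flatMap
      fun m : Fin 2 => List.replicate ((fun m : Fin 2 => if m = 0 then i else j) m) m)
      = List.replicate i 0 ++ List.replicate j 1 := by
    have h2 : List.finRange 2 = [0, 1] := by decide
    rw [h2]; simp [List.flatMap]
  have key : ∀ L : List (Fin 2), L = List.replicate i 0 ++ List.replicate j 1 →
      |iteratedFDeriv ℝ L.length
          (fun y : EuclideanSpace ℝ (Fin 2) => ((y 0) ^ 2 + (y 1) ^ (2 * k))⁻¹) x
          (fun t => EuclideanSpace.single (L.get t) 1)| ≤
        2 * ((2:ℝ) ^ (2 * k + 1) + 4) ^ (i + j) * (Nat.factorial i : ℝ) *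
          (Nat.factorial j : ℝ) * (|x 0| ^ (i + j + 2))⁻¹ := by
    intro L hLL
    subst hLL
    set a : ℝ := x 0 with hadef
    set b : ℝ := x 1 with hbdef
    have hapos : 0 < |a| := abs_pos.mpr hx0
    set δ : ℝ := ((2:ℝ)^(2*k+1)+4)⁻¹ with hδdef
    have hδpos : 0 < δ := by rw [hδdef]; positivity
    set r : ℝ := δ * |a| with hrdef
    have hrpos : 0 < r := by positivity
    set U : Set (ℂ × ℂ) := {z : ℂ × ℂ | z.1^2 + z.2^(2*k) ≠ 0} with hUdef
    have hUopen : IsOpen U := isOpen_compl_singleton.preimage (by fun_prop)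
    set F : ℂ × ℂ → ℂ := fun z => (z.1^2 + z.2^(2*k))⁻¹ with hFdef
    have hF : AnalyticOnNhd ℂ F U := fun z hz =>
      ((analyticAt_fst.pow 2).add (analyticAt_snd.pow (2*k))).inv hz
    have hpoly : ∀ z₁ z₂ : ℂ, dist z₁ (a:ℂ) ≤ r → dist z₂ (b:ℂ) ≤ r →
        (z₁, z₂) ∈ U ∧ ‖F (z₁, z₂)‖ ≤ 2 / a^2 := by
      intro z₁ z₂ h1 h2
      have hlow := psi_lower hk hx0 hx1 h1 h2
      have ha2 : 0 < a^2 := by positivity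
      constructor
      · show z₁^2 + z₂^(2*k) ≠ 0
        intro h0
        rw [h0] at hlow
        simp only [norm_zero] at hlow
        linarith
      · show ‖(z₁^2 + z₂^(2*k))⁻¹‖ ≤ 2/a^2
        rw [norm_inv, show 2/a^2 = (a^2/2)⁻¹ by rw [inv_div]]
        exact inv_anti₀ (by linarith) hlow
    have hxU : iotaE x ∈ U := by
      rw [iotaE_apply x]
      exact (hpoly (a:ℂ) (b:ℂ) (by simp [hrpos.le]) (by simp [hrpos.le])).1
    have hlen : (List.replicate i (0:Fin 2) ++ List.replicate j 1).length = i + j := by simp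
    have hfeq : (fun y : EuclideanSpace ℝ (Fin 2) => ((y 0) ^ 2 + (y 1) ^ (2 * k))⁻¹)
        = fun y => (F (iotaE y)).re := by
      funext y
      rw [iotaE_apply]
      show _ = (((y 0 : ℂ)^2 + (y 1 : ℂ)^(2*k))⁻¹).re
      rw [← Complex.ofReal_pow, ← Complex.ofReal_pow, ← Complex.ofReal_add,
        ← Complex.ofReal_inv, Complex.ofReal_re]
    rw [hfeq]
    rw [real_of_complex hUopen hF hxU _ _]
    have hgetv : ∀ t : Fin ((List.replicate i (0:Fin 2) ++ List.replicate j 1).length),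
        iotaE (EuclideanSpace.single
          ((List.replicate i (0:Fin 2) ++ List.replicate j 1).get t) 1)
          = if (t : ℕ) < i then ((1:ℂ), (0:ℂ)) else ((0:ℂ), (1:ℂ)) := by
      intro t
      have hget : (List.replicate i (0:Fin 2) ++ List.replicate j 1).get t
          = if (t : ℕ) < i then 0 else 1 := by
        have ht := t.isLt
        simp only [List.length_append, List.length_replicate] at ht
        rw [List.get_eq_getElem, List.getElem_append]
        split_ifs with h1 h2 h3
        · rw [List.getElem_replicate]
        · rw [List.length_replicate] at h1; omega
        · rw [List.length_replicate] at h1; omega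
        · rw [List.getElem_replicate]
      rw [hget]
      split_ifs
      · rw [iotaE_apply]
        norm_num [EuclideanSpace.single_apply]
      · rw [iotaE_apply]
        norm_num [EuclideanSpace.single_apply]
    rw [Cvec_eq_iteratedFDeriv hF hUopen _ _ _ hxU]
    rw [Cvec_pattern ((1:ℂ),(0:ℂ)) ((0:ℂ),(1:ℂ)) _ i j hlen _ hgetv F]
    have hDj : AnalyticOnNhd ℂ (Dpow ((0:ℂ),(1:ℂ)) j F) U :=
      Dpow_analytic hF hUopen _ j
    rw [iotaE_apply x]
    rw [Dpow_fst hDj hUopen i (a:ℂ) (b:ℂ) (by rw [iotaE_apply x] at hxU; exact hxU)]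
    -- Cauchy estimates
    have hMj : ∀ w : ℂ, dist w (a:ℂ) ≤ r →
        ‖Dpow ((0:ℂ),(1:ℂ)) j F (w, (b:ℂ))‖
          ≤ (Nat.factorial j : ℝ) * (2/a^2) / r^j := by
      intro w hwr
      have hwU : (w, (b:ℂ)) ∈ U := (hpoly w (b:ℂ) hwr (by simp [hrpos.le])).1
      rw [Dpow_snd hF hUopen j w (b:ℂ) hwU]
      apply cauchy_bound hrpos
      · intro u hu
        have huU : (w, u) ∈ U := (hpoly w u hwr (mem_closedBall.mp hu)).1
        have h1 : DifferentiableAt ℂ F (w, u) := (hF _ huU).differentiableAt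
        have h2 : DifferentiableAt ℂ (fun t : ℂ => ((w, t) : ℂ × ℂ)) u :=
          (differentiableAt_const _).prodMk differentiableAt_id
        exact (h1.comp u h2).differentiableWithinAt
      · intro u hu
        exact (hpoly w u hwr (le_of_eq (mem_sphere.mp hu))).2
    have hdiff : DifferentiableOn ℂ (fun t => Dpow ((0:ℂ),(1:ℂ)) j F (t, (b:ℂ)))
        (closedBall (a:ℂ) r) := by
      intro w hw
      have hwU : (w, (b:ℂ)) ∈ U :=
        (hpoly w (b:ℂ) (mem_closedBall.mp hw) (by simp [hrpos.le])).1
      have h1 : DifferentiableAt ℂ (Dpow ((0:ℂ),(1:ℂ)) j F) (w, (b:ℂ)) :=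
        (hDj _ hwU).differentiableAt
      have h2 : DifferentiableAt ℂ (fun t : ℂ => ((t, (b:ℂ)) : ℂ × ℂ)) w :=
        differentiableAt_id.prodMk (differentiableAt_const _)
      exact (h1.comp w h2).differentiableWithinAt
    have hfinal := cauchy_bound hrpos hdiff
      (fun w hw => hMj w (le_of_eq (mem_sphere.mp hw))) i
    calc |(iteratedDeriv i (fun t => Dpow ((0:ℂ),(1:ℂ)) j F (t, (b:ℂ))) (a:ℂ)).re|
        ≤ ‖iteratedDeriv i (fun t => Dpow ((0:ℂ),(1:ℂ)) j F (t, (b:ℂ))) (a:ℂ)‖ :=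
          Complex.abs_re_le_norm _
      _ ≤ (Nat.factorial i : ℝ) * ((Nat.factorial j : ℝ) * (2/a^2) / r^j) / r^i := hfinal
      _ = 2 * ((2:ℝ) ^ (2 * k + 1) + 4) ^ (i + j) * (Nat.factorial i : ℝ) *
          (Nat.factorial j : ℝ) * (|a| ^ (i + j + 2))⁻¹ := by
          have hc : (0:ℝ) < (2:ℝ)^(2*k+1)+4 := by positivity
          rw [hrdef, hδdef, ← sq_abs a]
          field_simp
          rw [div_pow, div_pow]
          field_simp
          ring
  exact key _ hL
end
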